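/- arXiv:1311.1612 — 7 statements merged into one kernel-verified Lean document; each statement's English description precedes it below -/
import Mathlib

section
/- Let D be a finite directed acyclic multigraph and let P be the line digraph order of D (elements are arcs of D, with arc x below arc y iff there is a directed path in D whose first arc is x and last arc is y, x ≠ y). Then for every linear extension L of the transitive-closure order on the vertices of D and every choice, for each vertex v, of a permutation of the out-arcs of v, the word obtained by concatenating these permutations in the order given by L is a linear extension of P. -/
/-- One vertex of a directed multigraph can reach another in one step. -/
def vStep {V E : Type*} (src dst : E → V) (u v : V) : Prop :=
  ∃ e : E, src e = u ∧ dst e = v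

/-- The line-digraph order on arcs: `x < y` iff some directed path has
first arc `x` and last arc `y` (consecutive arcs share a vertex). -/
def lineLT {V E : Type*} (src dst : E → V) (x y : E) : Prop :=
  Relation.TransGen (fun a b => dst a = src b) x y

open Function

theorem isStrictTotalOrder_lex_of_injective {α β κ γ : Type*} [LinearOrder κ] [LinearOrder γ]
    (key : α → β) (pos : β → κ) (hpos : Injective pos) (rank : α → γ)
    (hrank : ∀ a b, key a = key b → a ≠ b → rank a ≠ rank b) :
    IsStrictTotalOrder α
      (fun a b => pos (key a) < pos (key b) ∨ (key a = key b ∧ rank a < rank b)) := by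
  let f : α ↪ κ ×ₗ γ :=
    ⟨fun a => toLex (pos (key a), rank a), fun a b hab => by
      obtain ⟨hkey, hr⟩ := Prod.ext_iff.mp (toLex.injective hab)
      by_contra hne
      exact hrank a b (hpos hkey) hne hr⟩
  convert (RelEmbedding.preimage f (· < ·)).isStrictTotalOrder using 1
  ext a b
  change _ ↔ toLex (pos (key a), rank a) < toLex (pos (key b), rank b)
  rw [Prod.Lex.toLex_lt_toLex, hpos.eq_iff]

theorem lineLT.transGen_vStep_src {V E : Type*} {src dst : E → V} {x y : E}
    (h : lineLT src dst x y) : Relation.TransGen (vStep src dst) (src x) (src y) :=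
  Relation.TransGen.lift src (fun a _ hab => ⟨a, rfl, hab⟩) x y h

theorem stmt0_general {V E : Type*} [Fintype V]
    (src dst : E → V)
    (L : V ≃ Fin (Fintype.card V))
    (hL : ∀ u v : V, Relation.TransGen (vStep src dst) u v → L u < L v)
    (ord : E → ℕ)
    (hord : ∀ e f : E, src e = src f → e ≠ f → ord e ≠ ord f) :
    IsStrictTotalOrder E
      (fun e f => L (src e) < L (src f) ∨ (src e = src f ∧ ord e < ord f)) ∧
    ∀ x y : E, lineLT src dst x y →
      (L (src x) < L (src y) ∨ (src x = src y ∧ ord x < ord y)) :=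
  ⟨isStrictTotalOrder_lex_of_injective src L L.injective ord hord,
    fun _ _ h => Or.inl (hL _ _ h.transGen_vStep_src)⟩

/-- for a finite dag `D` (vertices `V`, arcs `E`), any linear
extension `L` of the transitive closure of `D` on vertices, and any choice of
orderings `ord` of the out-arcs of each vertex (injective on each out-arc set),
the concatenated word — i.e. the lexicographic relation comparing first the
`L`-position of the source and then `ord` — is a linear extension of the
line-digraph order of `D`. -/
theorem stmt0 {V E : Type*} [Fintype V] [Fintype E]
    (src dst : E → V)
    (hacyc : ∀ v : V, ¬ Relation.TransGen (vStep src dst) v v)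
    (L : V ≃ Fin (Fintype.card V))
    (hL : ∀ u v : V, Relation.TransGen (vStep src dst) u v → L u < L v)
    (ord : E → ℕ)
    (hord : ∀ e f : E, src e = src f → e ≠ f → ord e ≠ ord f) :
    IsStrictTotalOrder E
      (fun e f => L (src e) < L (src f) ∨ (src e = src f ∧ ord e < ord f)) ∧
    ∀ x y : E, lineLT src dst x y →
      (L (src x) < L (src y) ∨ (src x = src y ∧ ord x < ord y)) :=
  stmt0_general src dst L hL ord hord
end

section
/- Let P be a finite N-free order with arc diagram A(P). Then the number of linear extensions of P satisfies e(P) ≥ e(A(P)) · ∏_{v ∈ V(A(P))} (o_v !), where e(A(P)) is the number of linear extensions of the order given by the transitive closure of A(P), and o_v is the out-degree of vertex v in A(P). -/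
/-- The number of linear extensions of a relation `r` on a finite type. -/
noncomputable def numLinExt (α : Type*) [Fintype α] (r : α → α → Prop) : ℕ :=
  Nat.card {σ : α ≃ Fin (Fintype.card α) // ∀ x y : α, r x y → σ x < σ y}

/-- Out-degree of a vertex in a directed multigraph. -/
noncomputable def outDeg {V E : Type*} (src : E → V) (v : V) : ℕ :=
  Nat.card {e : E // src e = v}

open Function Relation

theorem Equiv.ext_of_lt_iff_lt {A : Type*} {k : ℕ} {σ σ' : A ≃ Fin k}
    (h : ∀ a b, σ a < σ b ↔ σ' a < σ' b) : σ = σ' := by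
  have hmono : StrictMono (σ.symm.trans σ') := fun i j hij => by
    simpa [← h] using hij
  have hid := congrArg (⇑) (Subsingleton.elim
    (hmono.orderIsoOfSurjective _ (σ.symm.trans σ').surjective) (OrderIso.refl _))
  exact Equiv.ext fun a => by simpa using (congrFun hid (σ a)).symm

noncomputable def rankEquiv {E β : Type*} [Fintype E] [LinearOrder β] (g : E → β)
    (hg : Injective g) : E ≃ Fin (Fintype.card E) :=
  letI := LinearOrder.lift' g hg
  (Fintype.orderIsoFinOfCardEq E rfl).symm.toEquiv

theorem rankEquiv_lt_rankEquiv_iff {E β : Type*} [Fintype E] [LinearOrder β] {g : E → β}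
    (hg : Injective g) {e f : E} : rankEquiv g hg e < rankEquiv g hg f ↔ g e < g f :=
  letI := LinearOrder.lift' g hg
  (Fintype.orderIsoFinOfCardEq E rfl).symm.lt_iff_lt

theorem numLinExt_le_of_equiv {α β : Type*} [Fintype α] [Fintype β] {r : α → α → Prop}
    {s : β → β → Prop} (φ : α ≃ β) (h : ∀ x y, r x y → s (φ x) (φ y)) :
    numLinExt β s ≤ numLinExt α r := by
  have hcard : Fintype.card β = Fintype.card α := (Fintype.card_congr φ).symm
  refine Nat.card_le_card_of_injective
    (fun τ => ⟨(φ.trans τ.1).trans (finCongr hcard), fun x y hxy => by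
      simpa using τ.2 _ _ (h x y hxy)⟩) ?_
  rintro ⟨τ, _⟩ ⟨τ', _⟩ hτ
  refine Subtype.ext (Equiv.ext fun b => ?_)
  simpa using Equiv.ext_iff.1 (congrArg Subtype.val hτ) (φ.symm b)

section ArcDiagram

variable {V E : Type*} {src dst : E → V}

theorem transGen_vStep_src_of_lineLT {e f : E} (h : lineLT src dst e f) :
    TransGen (vStep src dst) (src e) (src f) := by
  induction h with
  | single h => exact .single ⟨_, rfl, h⟩
  | tail _ h ih => exact ih.tail ⟨_, rfl, h⟩

theorem apply_le_apply_of_lt_along_arcs {β : Type*} [Finite V] [LinearOrder β] {σ : V → β}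
    (hσ : ∀ e, σ (src e) < σ (dst e)) {t : V} (ht : ∀ v ≠ t, ∃ e, src e = v) (v : V) :
    σ v ≤ σ t := by
  have : Nonempty V := ⟨v⟩
  obtain ⟨u, hu⟩ := Finite.exists_max σ
  obtain rfl : u = t := by
    by_contra hut
    obtain ⟨e, rfl⟩ := ht u hut
    exact (hu (dst e)).not_gt (hσ e)
  exact hu v

variable (src) in
abbrev OutArcOrdering : Type _ := ∀ v : V, {e : E // src e = v} ≃ Fin (outDeg src v)

theorem card_outArcOrdering [Fintype V] [Fintype E] :
    Nat.card (OutArcOrdering src) = ∏ v, (outDeg src v).factorial := by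
  classical
  rw [Nat.card_pi]
  refine Finset.prod_congr rfl fun v _ => ?_
  rw [Nat.card_eq_fintype_card, Fintype.card_equiv (β := Fin (outDeg src v)) (Finite.equivFin _),
    outDeg, Nat.card_eq_fintype_card]

-- The second coordinate lives in `ℕ` rather than `Fin (outDeg src (src e))` so that the key type
-- does not depend on `e`.
def arcKey {m : ℕ} (σ : V ≃ Fin m) (π : OutArcOrdering src) (e : E) : Fin m ×ₗ ℕ :=
  toLex (σ (src e), π (src e) ⟨e, rfl⟩)

variable {m : ℕ} {σ : V ≃ Fin m} {π : OutArcOrdering src} {e f : E} {v : V}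

theorem arcKey_of_src_eq (he : src e = v) :
    arcKey σ π e = toLex (σ v, (π v ⟨e, he⟩ : ℕ)) := by
  subst he; rfl

theorem arcKey_lt_arcKey_iff_of_src_ne (h : src e ≠ src f) :
    arcKey σ π e < arcKey σ π f ↔ σ (src e) < σ (src f) := by
  simp [arcKey, Prod.Lex.toLex_lt_toLex, σ.injective.eq_iff, h]

theorem arcKey_lt_arcKey_iff_of_src_eq (he : src e = v) (hf : src f = v) :
    arcKey σ π e < arcKey σ π f ↔ π v ⟨e, he⟩ < π v ⟨f, hf⟩ := by
  rw [arcKey_of_src_eq he, arcKey_of_src_eq hf, Prod.Lex.toLex_lt_toLex]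
  simp

theorem arcKey_injective : Injective (arcKey σ π) := by
  intro e f h
  have hsrc : src e = src f := σ.injective (congrArg (fun k => (ofLex k).1) h)
  rw [arcKey_of_src_eq hsrc, arcKey_of_src_eq rfl] at h
  exact congrArg Subtype.val ((π _).injective (Fin.ext (congrArg (fun k => (ofLex k).2) h)))

theorem arcKey_lt_arcKey_of_lineLT (hσ : ∀ x y, TransGen (vStep src dst) x y → σ x < σ y)
    (h : lineLT src dst e f) : arcKey σ π e < arcKey σ π f :=
  Prod.Lex.toLex_lt_toLex.2 (.inl (hσ _ _ (transGen_vStep_src_of_lineLT h)))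

theorem eq_of_arcKey_lt_arcKey_iff [Finite V] {σ' : V ≃ Fin m} {π' : OutArcOrdering src}
    (hσ : ∀ e, σ (src e) < σ (dst e)) (hσ' : ∀ e, σ' (src e) < σ' (dst e))
    {t : V} (ht : ∀ v ≠ t, ∃ e, src e = v)
    (h : ∀ e f, arcKey σ π e < arcKey σ π f ↔ arcKey σ' π' e < arcKey σ' π' f) :
    σ = σ' ∧ π = π' := by
  -- Every vertex but `t` is the tail of an arc, and `t` comes last in both `σ` and `σ'`.
  obtain rfl : σ = σ' := Equiv.ext_of_lt_iff_lt fun u v => by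
    rcases eq_or_ne u v with rfl | huv
    · simp
    rcases eq_or_ne v t with rfl | hv
    · exact iff_of_true ((apply_le_apply_of_lt_along_arcs hσ ht u).lt_of_ne (σ.injective.ne huv))
        ((apply_le_apply_of_lt_along_arcs hσ' ht u).lt_of_ne (σ'.injective.ne huv))
    rcases eq_or_ne u t with rfl | hu
    · exact iff_of_false (apply_le_apply_of_lt_along_arcs hσ ht v).not_gt
        (apply_le_apply_of_lt_along_arcs hσ' ht v).not_gt
    obtain ⟨e, rfl⟩ := ht u hu
    obtain ⟨f, rfl⟩ := ht v hv
    rw [← arcKey_lt_arcKey_iff_of_src_ne (π := π) huv,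
      ← arcKey_lt_arcKey_iff_of_src_ne (π := π') huv]
    exact h e f
  refine ⟨rfl, funext fun v => Equiv.ext_of_lt_iff_lt fun x y => ?_⟩
  rw [← arcKey_lt_arcKey_iff_of_src_eq x.2 y.2, ← arcKey_lt_arcKey_iff_of_src_eq x.2 y.2]
  exact h x y

theorem numLinExt_mul_prod_factorial_outDeg_le [Fintype V] [Fintype E] {t : V}
    (ht : ∀ v ≠ t, ∃ e, src e = v) :
    numLinExt V (TransGen (vStep src dst)) * ∏ v, (outDeg src v).factorial ≤
      numLinExt E (lineLT src dst) := by
  rw [← card_outArcOrdering, numLinExt, numLinExt, ← Nat.card_prod]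
  refine Nat.card_le_card_of_injective (fun d => ⟨rankEquiv (arcKey d.1.1 d.2) arcKey_injective,
    fun e f h => (rankEquiv_lt_rankEquiv_iff _).2 (arcKey_lt_arcKey_of_lineLT d.1.2 h)⟩) ?_
  rintro ⟨⟨σ, hσ⟩, π⟩ ⟨⟨σ', hσ'⟩, π'⟩ hrank
  have hrank' : rankEquiv (arcKey σ π) arcKey_injective =
      rankEquiv (arcKey σ' π') arcKey_injective := congrArg Subtype.val hrank
  obtain ⟨rfl, rfl⟩ := eq_of_arcKey_lt_arcKey_iff (fun e => hσ _ _ (.single ⟨e, rfl, rfl⟩))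
    (fun e => hσ' _ _ (.single ⟨e, rfl, rfl⟩)) ht fun e f => by
      rw [← rankEquiv_lt_rankEquiv_iff arcKey_injective, hrank', rankEquiv_lt_rankEquiv_iff]
  rfl

end ArcDiagram

theorem stmt1_general {α V E : Type*} [Fintype α] [PartialOrder α] [Fintype V] [Fintype E]
    (src dst : E → V)
    (hsink : ∃! t : V, ∀ e : E, src e ≠ t)
    (φ : α ≃ E)
    (hφ : ∀ x y : α, x < y ↔ lineLT src dst (φ x) (φ y)) :
    numLinExt V (Relation.TransGen (vStep src dst)) *
        ∏ v : V, Nat.factorial (outDeg src v) ≤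
      numLinExt α (· < ·) := by
  obtain ⟨t, -, ht⟩ := hsink
  have hout : ∀ v ≠ t, ∃ e, src e = v := fun v hv => by
    by_contra! h
    exact hv (ht v h)
  calc _ ≤ numLinExt E (lineLT src dst) := numLinExt_mul_prod_factorial_outDeg_le hout
    _ ≤ numLinExt α (· < ·) := numLinExt_le_of_equiv φ fun x y => (hφ x y).1

/-- if `P` (a finite order on `α`) is N-free, witnessed by its
arc diagram — a finite dag with a unique source and a unique sink whose
line-digraph order is isomorphic to `P` via `φ` — then
`e(A(P)) · ∏_v o_v! ≤ e(P)`. -/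
theorem stmt1 {α V E : Type*} [Fintype α] [PartialOrder α] [Fintype V] [Fintype E]
    (src dst : E → V)
    (hacyc : ∀ v : V, ¬ Relation.TransGen (vStep src dst) v v)
    (hsource : ∃! s : V, ∀ e : E, dst e ≠ s)
    (hsink : ∃! t : V, ∀ e : E, src e ≠ t)
    (φ : α ≃ E)
    (hφ : ∀ x y : α, x < y ↔ lineLT src dst (φ x) (φ y)) :
    numLinExt V (Relation.TransGen (vStep src dst)) *
        ∏ v : V, Nat.factorial (outDeg src v) ≤
      numLinExt α (· < ·) :=
  stmt1_general src dst hsink φ hφ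
end

section
/- Let P be a finite N-free order with n elements and arc diagram A(P). Then e(P) ≤ n! · ∏_{v ∈ V(A(P))} (binom(i_v + o_v, o_v))^{-1}, where i_v and o_v are the in-degree and out-degree of vertex v in A(P). Equivalently, the number of linear extensions of P times ∏_v binom(i_v+o_v, o_v) is at most n!. -/
/-- In-degree of a vertex in a directed multigraph. -/
noncomputable def inDeg {V E : Type*} (dst : E → V) (v : V) : ℕ :=
  Nat.card {e : E // dst e = v}

/-!
Induction on the number of arcs. The first arc `e` of a linear extension leaves a vertex `u`
with `i_u = 0`, and the remaining arcs form a linear extension of the line order of `A - e`.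
Deleting `e` keeps the factor `C(0 + o_u, o_u) = 1` at `u` and divides the factor at
`w = dst e` by `(i_w + o_w) / i_w`. By induction, therefore,
`e(P) · ∏ ≤ (n - 1)! · Σ_e (1 + o_w / i_w)` with `e` running over the arcs leaving in-degree-zero vertices. There are `Σ_{i_u = 0} o_u`
such arcs, while `o_w / i_w` summed over all arcs is `Σ_{i_w > 0} o_w`; the total is `n`.
-/

open Finset

section LinearExtensions

variable {α E : Type*}

abbrev LinExt (r : E → E → Prop) (n : ℕ) : Type _ :=
  {σ : E ≃ Fin n // ∀ x y, r x y → σ x < σ y}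

noncomputable def linExtCount (r : E → E → Prop) (n : ℕ) : ℕ :=
  Nat.card (LinExt r n)

lemma linExtCount_congr {r : α → α → Prop} {s : E → E → Prop} (g : α ≃ E)
    (h : ∀ x y, r x y ↔ s (g x) (g y)) (n : ℕ) : linExtCount r n = linExtCount s n :=
  Nat.card_congr <| (g.equivCongr (.refl _)).subtypeEquiv fun σ => by
    simp [g.forall_congr_left, h]

lemma linExtCount_anti [Finite E] {r s : E → E → Prop} (h : ∀ x y, r x y → s x y)
    (n : ℕ) : linExtCount s n ≤ linExtCount r n :=
  Nat.card_le_card_of_injective (Subtype.impEmbedding _ _ fun _ hσ x y hxy => hσ x y (h x y hxy))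
    (Subtype.impEmbedding _ _ _).injective

lemma linExtCount_le_factorial [Fintype E] (r : E → E → Prop) {n : ℕ}
    (hn : Fintype.card E = n) : linExtCount r n ≤ n.factorial := by
  classical
  calc linExtCount r n ≤ Nat.card (E ≃ Fin n) := Finite.card_subtype_le _
    _ = n.factorial := by
      rw [Nat.card_eq_fintype_card, Fintype.card_equiv (Fintype.equivFinOfCardEq hn), hn]

def Equiv.removeZero {m : ℕ} (σ : E ≃ Fin (m + 1)) {e : E} (he : σ e = 0) :
    {f // f ≠ e} ≃ Fin m :=
  (σ.subtypeEquiv fun f => by rw [← he, σ.injective.ne_iff]).trans (finSuccAboveEquiv 0).symm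

lemma Equiv.succ_removeZero {m : ℕ} (σ : E ≃ Fin (m + 1)) {e : E} (he : σ e = 0)
    (f : {f // f ≠ e}) : (σ.removeZero he f).succ = σ f :=
  congrArg Subtype.val ((finSuccAboveEquiv 0).apply_symm_apply (σ.subtypeEquiv _ f))

lemma Equiv.removeZero_lt_removeZero_iff {m : ℕ} (σ : E ≃ Fin (m + 1)) {e : E} (he : σ e = 0)
    {f g : {f // f ≠ e}} : σ.removeZero he f < σ.removeZero he g ↔ σ f < σ g := by
  rw [← Fin.succ_lt_succ_iff, σ.succ_removeZero, σ.succ_removeZero]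

lemma Equiv.eq_of_removeZero_eq {m : ℕ} {σ τ : E ≃ Fin (m + 1)} {e : E} (hσ : σ e = 0)
    (hτ : τ e = 0) (h : σ.removeZero hσ = τ.removeZero hτ) : σ = τ := by
  ext x
  by_cases hx : x = e
  · rw [hx, hσ, hτ]
  · rw [← σ.succ_removeZero hσ ⟨x, hx⟩, ← τ.succ_removeZero hτ ⟨x, hx⟩, h]

lemma card_linExt_fiber_le {r : E → E → Prop} {m : ℕ} (e : E) :
    Nat.card {σ : LinExt r (m + 1) // σ.1.symm 0 = e} ≤
      linExtCount (fun x y : {f // f ≠ e} => r x y) m := by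
  have he (σ : LinExt r (m + 1)) (h : σ.1.symm 0 = e) : σ.1 e = 0 :=
    (σ.1.symm_apply_eq.mp h).symm
  refine Nat.card_le_card_of_injective
    (fun σ => ⟨σ.1.1.removeZero (he σ.1 σ.2), fun x y hxy =>
      (σ.1.1.removeZero_lt_removeZero_iff _).mpr (σ.1.2 x y hxy)⟩) fun σ τ h => ?_
  exact Subtype.ext <| Subtype.ext <|
    Equiv.eq_of_removeZero_eq (he σ.1 σ.2) (he τ.1 τ.2) (congrArg Subtype.val h)

open scoped Classical in
lemma linExtCount_succ_le [Fintype E] (r : E → E → Prop) (m : ℕ) :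
    linExtCount r (m + 1) ≤
      ∑ e with ∀ x, ¬ r x e, linExtCount (fun x y : {f // f ≠ e} => r x y) m := by
  let fiber (e : E) := {σ : LinExt r (m + 1) // σ.1.symm 0 = e}
  have hmin (e : E) (σ : fiber e) (x : E) : ¬ r x e := fun hxe => by
    simpa [← σ.2] using σ.1.2 x e hxe
  calc linExtCount r (m + 1) = Nat.card (Σ e, fiber e) :=
        Nat.card_congr (Equiv.sigmaFiberEquiv _).symm
    _ = ∑ e, Nat.card (fiber e) := Nat.card_sigma
    _ = ∑ e with ∀ x, ¬ r x e, Nat.card (fiber e) := by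
        refine (sum_filter_of_ne fun e _ hne => ?_).symm
        obtain ⟨σ⟩ := Nat.card_ne_zero.mp hne |>.1
        exact hmin e σ
    _ ≤ _ := sum_le_sum fun e _ => card_linExt_fiber_le e

end LinearExtensions

section Multigraph

variable {V E : Type*}

noncomputable def binomProd [Fintype V] (src dst : E → V) : ℕ :=
  ∏ v, (inDeg dst v + outDeg src v).choose (outDeg src v)

abbrev deleteArc (g : E → V) (e : E) : {f // f ≠ e} → V :=
  Subtype.restrict (· ≠ e) g

lemma lineLT_of_lineLT_deleteArc {src dst : E → V} {e : E} {x y : {f // f ≠ e}}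
    (h : lineLT (deleteArc src e) (deleteArc dst e) x y) :
    lineLT src dst x y :=
  Relation.TransGen.lift Subtype.val (fun _ _ hab => hab) x y h

lemma inDeg_src_eq_zero {src dst : E → V} {e : E} (he : ∀ x, ¬ lineLT src dst x e) :
    inDeg dst (src e) = 0 :=
  Nat.card_eq_zero.mpr <| .inl ⟨fun f => he f.1 (.single f.2)⟩

lemma outDeg_deleteArc_of_ne [Fintype E] (g : E → V) {e : E} {v : V} (hv : g e ≠ v) :
    outDeg (deleteArc g e) v = outDeg g v :=
  Nat.card_congr <| (Equiv.subtypeSubtypeEquivSubtypeInter _ (g · = v)).trans <|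
    Equiv.subtypeEquivRight fun f => ⟨And.right, fun hf => ⟨by rintro rfl; exact hv hf, hf⟩⟩

lemma outDeg_deleteArc_add_one [Fintype E] (g : E → V) (e : E) :
    outDeg (deleteArc g e) (g e) + 1 = outDeg g (g e) := by
  classical
  change Nat.card {f : {f // f ≠ e} // g f = g e} + 1 = Nat.card {f // g f = g e}
  rw [Nat.card_congr (Equiv.subtypeSubtypeEquivSubtypeInter _ (g · = g e)),
    Nat.card_eq_fintype_card, Nat.card_eq_fintype_card, Fintype.card_subtype,
    Fintype.card_subtype, ← card_erase_add_one (s := {f | g f = g e}) (a := e) (by simp)]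
  congr 2
  ext f
  simp [and_comm]

lemma inDeg_deleteArc_of_ne [Fintype E] (g : E → V) {e : E} {v : V} (hv : g e ≠ v) :
    inDeg (deleteArc g e) v = inDeg g v :=
  outDeg_deleteArc_of_ne g hv

lemma inDeg_deleteArc_add_one [Fintype E] (g : E → V) (e : E) :
    inDeg (deleteArc g e) (g e) + 1 = inDeg g (g e) :=
  outDeg_deleteArc_add_one g e

lemma choose_add_add_one_mul (j o : ℕ) :
    (j + 1 + o).choose o * (j + 1) = (j + o).choose o * (j + 1 + o) := by
  have h := Nat.choose_mul_succ_eq (j + o) o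
  rw [show j + o + 1 - o = j + 1 by omega, show j + o + 1 = j + 1 + o by omega] at h
  exact h.symm

lemma binomProd_mul_inDeg [Fintype V] [Fintype E] {src dst : E → V} {e : E}
    (he : inDeg dst (src e) = 0) :
    binomProd src dst * inDeg dst (dst e) =
      binomProd (deleteArc src e) (deleteArc dst e) *
        (inDeg dst (dst e) + outDeg src (dst e)) := by
  classical
  have hin := inDeg_deleteArc_add_one dst e
  have hsrc : src e ≠ dst e := fun h => by rw [h, ← hin] at he; omega
  have hrest : ∀ v ≠ dst e,
      (inDeg (deleteArc dst e) v + outDeg (deleteArc src e) v).choose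
        (outDeg (deleteArc src e) v) =
      (inDeg dst v + outDeg src v).choose (outDeg src v) := by
    intro v hv
    rw [inDeg_deleteArc_of_ne dst (Ne.symm hv)]
    by_cases hvs : v = src e
    · subst hvs
      simp [he]
    · rw [outDeg_deleteArc_of_ne src (Ne.symm hvs)]
  rw [binomProd, binomProd, ← mul_prod_erase univ _ (mem_univ (dst e)),
    ← mul_prod_erase univ _ (mem_univ (dst e)),
    prod_congr rfl fun v hv => hrest v (ne_of_mem_erase hv), outDeg_deleteArc_of_ne src hsrc,
    ← hin, mul_right_comm, choose_add_add_one_mul, mul_right_comm]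

lemma sum_comp_eq_sum_outDeg_smul [Fintype V] [Fintype E] {M : Type*} [AddCommMonoid M]
    (g : E → V) (f : V → M) : ∑ e, f (g e) = ∑ v, outDeg g v • f v := by
  classical
  simp [← Fintype.sum_fiberwise' g f, outDeg, Nat.card_eq_fintype_card]

lemma sum_one_add_outDeg_div_inDeg_le [Fintype V] [Fintype E] {src dst : E → V}
    (M : Finset E) (hM : ∀ e ∈ M, inDeg dst (src e) = 0) :
    ∑ e ∈ M, (1 + outDeg src (dst e) / inDeg dst (dst e) : ℚ) ≤ Fintype.card E := by
  let F (e : E) : ℚ :=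
    (if inDeg dst (src e) = 0 then 1 else 0) + outDeg src (dst e) / inDeg dst (dst e)
  calc ∑ e ∈ M, (1 + outDeg src (dst e) / inDeg dst (dst e) : ℚ) = ∑ e ∈ M, F e :=
        sum_congr rfl fun e he => by simp [F, hM e he]
    _ ≤ ∑ e, F e := sum_le_univ_sum_of_nonneg fun e =>
        add_nonneg (by split_ifs <;> norm_num) (by positivity)
    _ = ∑ v, (outDeg src v • (if inDeg dst v = 0 then 1 else 0) +
          inDeg dst v • (outDeg src v / inDeg dst v : ℚ)) := by
        rw [sum_add_distrib,
          sum_comp_eq_sum_outDeg_smul src fun v => if inDeg dst v = 0 then 1 else 0,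
          sum_comp_eq_sum_outDeg_smul dst fun v => (outDeg src v / inDeg dst v : ℚ),
          ← sum_add_distrib]
        rfl
    _ = ∑ v, outDeg src v • (1 : ℚ) := sum_congr rfl fun v _ => by
        by_cases h : inDeg dst v = 0
        · simp [h]
        · simp [h, mul_div_cancel₀]
    _ = Fintype.card E := by
        rw [← sum_comp_eq_sum_outDeg_smul src fun _ => (1 : ℚ)]
        simp

lemma linExtCount_lineLT_succ_le [Fintype E] (src dst : E → V) (m : ℕ) :
    linExtCount (lineLT src dst) (m + 1) ≤
      ∑ e with inDeg dst (src e) = 0,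
        linExtCount (lineLT (deleteArc src e) (deleteArc dst e)) m := by
  classical
  calc _ ≤ _ := linExtCount_succ_le _ m
    _ ≤ _ := sum_le_sum fun e _ => linExtCount_anti (fun _ _ => lineLT_of_lineLT_deleteArc) m
    _ ≤ _ := sum_le_sum_of_subset (monotone_filter_right _ fun _ _ => inDeg_src_eq_zero)

lemma linExtCount_deleteArc_mul_binomProd_le [Fintype V] [Fintype E] {src dst : E → V} {e : E}
    {m : ℕ} (he : inDeg dst (src e) = 0)
    (hm : linExtCount (lineLT (deleteArc src e) (deleteArc dst e)) m *
      binomProd (deleteArc src e) (deleteArc dst e) ≤ m.factorial) :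
    (linExtCount (lineLT (deleteArc src e) (deleteArc dst e)) m *
      binomProd src dst : ℚ) ≤ m.factorial * (1 + outDeg src (dst e) / inDeg dst (dst e)) := by
  have : Nonempty {f // dst f = dst e} := ⟨⟨e, rfl⟩⟩
  have hpos : (0 : ℚ) < inDeg dst (dst e) := by exact_mod_cast Nat.card_pos
  rw [one_add_div hpos.ne', ← mul_div_assoc, le_div_iff₀ hpos, mul_assoc]
  have key := Nat.mul_le_mul_right (inDeg dst (dst e) + outDeg src (dst e)) hm
  rw [mul_assoc, ← binomProd_mul_inDeg he] at key
  exact_mod_cast key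

theorem linExtCount_lineLT_mul_binomProd_le [Fintype V] [Fintype E] (src dst : E → V) {n : ℕ}
    (hn : Fintype.card E = n) :
    linExtCount (lineLT src dst) n * binomProd src dst ≤ n.factorial := by
  induction n generalizing E with
  | zero =>
    have : IsEmpty E := Fintype.card_eq_zero_iff.mp hn
    have hB : binomProd src dst = 1 := by simp [binomProd, inDeg, outDeg]
    simpa [hB] using linExtCount_le_factorial (lineLT src dst) hn
  | succ m ih =>
    classical
    have hterm (e : E) (he : e ∈ ({e | inDeg dst (src e) = 0} : Finset E)) :=
      linExtCount_deleteArc_mul_binomProd_le (mem_filter.mp he).2 (ih _ _ (by simp [hn]))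
    have : (linExtCount (lineLT src dst) (m + 1) * binomProd src dst : ℚ) ≤ (m + 1).factorial :=
      calc (linExtCount (lineLT src dst) (m + 1) * binomProd src dst : ℚ)
          ≤ (∑ e with inDeg dst (src e) = 0, linExtCount
              (lineLT (deleteArc src e) (deleteArc dst e)) m : ℕ) *
            (binomProd src dst : ℚ) := by
            gcongr
            exact linExtCount_lineLT_succ_le src dst m
        _ ≤ ∑ e with inDeg dst (src e) = 0,
            (m.factorial * (1 + outDeg src (dst e) / inDeg dst (dst e)) : ℚ) := by
            push_cast
            rw [sum_mul]
            exact sum_le_sum hterm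
        _ ≤ m.factorial * (m + 1) := by
            rw [← mul_sum]
            gcongr
            simpa [hn] using sum_one_add_outDeg_div_inDeg_le (src := src) (dst := dst) _
              fun e he => (mem_filter.mp he).2
        _ = (m + 1).factorial := by push_cast [Nat.factorial_succ]; ring
    exact_mod_cast this

end Multigraph

theorem stmt2_general {α V E : Type*} [Fintype α] [PartialOrder α] [Fintype V] [Fintype E]
    (src dst : E → V)
    (φ : α ≃ E)
    (hφ : ∀ x y : α, x < y ↔ lineLT src dst (φ x) (φ y)) :
    numLinExt α (· < ·) *
        ∏ v : V, Nat.choose (inDeg dst v + outDeg src v) (outDeg src v) ≤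
      Nat.factorial (Fintype.card α) := by
  have h := linExtCount_lineLT_mul_binomProd_le src dst (Fintype.card_congr φ).symm
  rwa [← linExtCount_congr φ hφ] at h

/-- if `P` (a finite order on `α`, with `n` elements) is N-free
with arc diagram the dag `(V, E, src, dst)` (unique source, unique sink), then
`e(P) · ∏_v C(i_v + o_v, o_v) ≤ n!`, i.e.
`e(P) ≤ n! · ∏_v C(i_v + o_v, o_v)⁻¹`. -/
theorem stmt2 {α V E : Type*} [Fintype α] [PartialOrder α] [Fintype V] [Fintype E]
    (src dst : E → V)
    (hacyc : ∀ v : V, ¬ Relation.TransGen (vStep src dst) v v)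
    (hsource : ∃! s : V, ∀ e : E, dst e ≠ s)
    (hsink : ∃! t : V, ∀ e : E, src e ≠ t)
    (φ : α ≃ E)
    (hφ : ∀ x y : α, x < y ↔ lineLT src dst (φ x) (φ y)) :
    numLinExt α (· < ·) *
        ∏ v : V, Nat.choose (inDeg dst v + outDeg src v) (outDeg src v) ≤
      Nat.factorial (Fintype.card α) :=
  stmt2_general src dst φ hφ
end

section
/- Let D be a finite directed acyclic multigraph with vertices enumerated v_1, …, v_k in a topological order, and let σ be a uniformly random permutation of the arcs of D. For each j, let G_j be the event that v_j is good with respect to σ (all in-arcs precede all out-arcs of v_j). Then for every j, Pr(G_j | G_1 ∩ … ∩ G_{j-1}) ≤ Pr(G_j) = binom(i_{v_j}+o_{v_j}, o_{v_j})^{-1}, assuming Pr(G_1 ∩ … ∩ G_{j-1}) > 0. -/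
/-- A vertex `v` is good w.r.t. a permutation `σ` of the arcs if every arc
with head `v` occurs before every arc with tail `v`. -/
def IsGood {V E : Type*} {n : ℕ} (src dst : E → V) (v : V) (σ : E ≃ Fin n) : Prop :=
  ∀ e f : E, dst e = v → src f = v → σ e < σ f

set_option linter.unusedSectionVars false
set_option maxHeartbeats 1000000

open Finset

namespace Stmt4Aux

variable {E : Type*} [Fintype E] [DecidableEq E] {n : ℕ}

lemma card_image_equiv (t : Finset E) (σ : E ≃ Fin n) : (t.image σ).card = t.card :=
  card_image_of_injective t σ.injective

noncomputable def emb (t : Finset E) (σ : E ≃ Fin n) : Fin t.card ↪o Fin n :=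
  (t.image σ).orderEmbOfFin (card_image_equiv t σ)

noncomputable def iso (t : Finset E) (σ : E ≃ Fin n) : Fin t.card ≃o {x // x ∈ t.image σ} :=
  (t.image σ).orderIsoOfFin (card_image_equiv t σ)

lemma coe_iso (t : Finset E) (σ : E ≃ Fin n) (k : Fin t.card) :
    (iso t σ k : Fin n) = emb t σ k := rfl

noncomputable def rk (t : Finset E) (σ : E ≃ Fin n) (e : E) (he : e ∈ t) : Fin t.card :=
  (iso t σ).symm ⟨σ e, mem_image_of_mem σ he⟩

lemma emb_rk (t : Finset E) (σ : E ≃ Fin n) (e : E) (he : e ∈ t) :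
    emb t σ (rk t σ e he) = σ e := by
  have h1 := (iso t σ).apply_symm_apply ⟨σ e, mem_image_of_mem σ he⟩
  have h2 := congrArg Subtype.val h1
  exact h2

lemma rk_eq_of_emb (t : Finset E) (σ : E ≃ Fin n) (e : E) (he : e ∈ t) (k : Fin t.card)
    (h : σ e = emb t σ k) : rk t σ e he = k := by
  apply (iso t σ).injective
  apply Subtype.ext
  show ((iso t σ) (rk t σ e he) : Fin n) = _
  rw [coe_iso, emb_rk, coe_iso, h]

lemma rk_inj (t : Finset E) (σ : E ≃ Fin n) {e f : E} (he : e ∈ t) (hf : f ∈ t)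
    (h : rk t σ e he = rk t σ f hf) : e = f := by
  have := congrArg (fun k => emb t σ k) h
  simp only [emb_rk] at this
  exact σ.injective this

lemma rk_surj (t : Finset E) (σ : E ≃ Fin n) (k : Fin t.card) :
    ∃ e, ∃ he : e ∈ t, rk t σ e he = k := by
  have hmem : emb t σ k ∈ t.image σ := orderEmbOfFin_mem _ _ _
  rcases mem_image.1 hmem with ⟨e, he, hee⟩
  exact ⟨e, he, rk_eq_of_emb t σ e he k hee⟩

lemma mem_image_iff (t : Finset E) (σ : E ≃ Fin n) (e : E) :
    σ e ∈ t.image σ ↔ e ∈ t := by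
  constructor
  · intro h; rcases mem_image.1 h with ⟨f, hf, hfe⟩
    rwa [← σ.injective hfe]
  · exact mem_image_of_mem σ

lemma rk_lt_rk (t : Finset E) (σ : E ≃ Fin n) {e f : E} (he : e ∈ t) (hf : f ∈ t) :
    rk t σ e he < rk t σ f hf ↔ σ e < σ f := by
  rw [← (emb t σ).lt_iff_lt, emb_rk, emb_rk]

/-- a strictly monotone map `Fin c → Fin m` satisfies `k ≤ f k`. -/
lemma le_apply_of_strictMono {c m : ℕ} {f : Fin c → Fin m} (hf : StrictMono f) (k : Fin c) :
    (k : ℕ) ≤ (f k : ℕ) := by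
  have H : ∀ v (hv : v < c), v ≤ (f ⟨v, hv⟩ : ℕ) := by
    intro v
    induction v with
    | zero => intro _; exact Nat.zero_le _
    | succ w ih =>
      intro hv
      have hw : w < c := Nat.lt_of_succ_lt hv
      have h1 : f ⟨w, hw⟩ < f ⟨w + 1, hv⟩ := hf (by simp [Fin.lt_def])
      exact Nat.lt_of_le_of_lt (ih hw) h1
  simpa using H k.1 k.2

lemma card_filter_val_lt {N c : ℕ} (h : c ≤ N) :
    (univ.filter (fun k : Fin N => (k : ℕ) < c)).card = c := by
  have himg : univ.filter (fun k : Fin N => (k : ℕ) < c) =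
      Finset.image (fun k : Fin c => (⟨k.1, lt_of_lt_of_le k.2 h⟩ : Fin N)) univ := by
    ext y
    simp only [mem_filter, mem_univ, true_and, mem_image]
    constructor
    · intro hy; exact ⟨⟨y.1, hy⟩, rfl⟩
    · rintro ⟨k, rfl⟩; exact k.2
  have hinj : Function.Injective (fun k : Fin c => (⟨k.1, lt_of_lt_of_le k.2 h⟩ : Fin N)) :=
    by intro a b hab; simp only [Fin.mk.injEq] at hab; exact Fin.ext hab
  rw [himg, card_image_of_injective _ hinj, card_univ, Fintype.card_fin]


section Phi

variable (A B : Finset E)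

/-- goodness of the cut `(A, B)` -/
def GoodAB (σ : E ≃ Fin n) : Prop := ∀ e ∈ A, ∀ f ∈ B, σ e < σ f

/-- the rearranged permutation: elements of `B` go to the `T`-slots (in order),
elements of `A` to the complementary slots. -/
noncomputable def phiFun (σ : E ≃ Fin n) (T : Finset (Fin (A ∪ B).card))
    (hT : T.card = B.card) (hTc : Tᶜ.card = A.card) (e : E) : Fin n :=
  if hA : e ∈ A then emb (A ∪ B) σ (Tᶜ.orderEmbOfFin hTc (rk A σ e hA))
  else if hB : e ∈ B then emb (A ∪ B) σ (T.orderEmbOfFin hT (rk B σ e hB))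
  else σ e

variable {A B} (σ : E ≃ Fin n) (T : Finset (Fin (A ∪ B).card))
  (hT : T.card = B.card) (hTc : Tᶜ.card = A.card)

lemma phiFun_apply_A {e : E} (he : e ∈ A) :
    phiFun A B σ T hT hTc e = emb (A ∪ B) σ (Tᶜ.orderEmbOfFin hTc (rk A σ e he)) := by
  simp [phiFun, he]

lemma phiFun_apply_B {e : E} (he : e ∈ B) (heA : e ∉ A) :
    phiFun A B σ T hT hTc e = emb (A ∪ B) σ (T.orderEmbOfFin hT (rk B σ e he)) := by
  simp [phiFun, he, heA]

lemma phiFun_apply_out {e : E} (heA : e ∉ A) (heB : e ∉ B) :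
    phiFun A B σ T hT hTc e = σ e := by
  simp [phiFun, heA, heB]

lemma phiFun_mem {e : E} (he : e ∈ A ∪ B) :
    phiFun A B σ T hT hTc e ∈ (A ∪ B).image σ := by
  by_cases hA : e ∈ A
  · rw [phiFun_apply_A σ T hT hTc hA]; exact orderEmbOfFin_mem _ _ _
  · have hB : e ∈ B := (mem_union.1 he).resolve_left hA
    rw [phiFun_apply_B σ T hT hTc hB hA]; exact orderEmbOfFin_mem _ _ _

lemma phiFun_injective : Function.Injective (phiFun A B σ T hT hTc) := by
  intro x y hxy
  by_cases hxs : x ∈ A ∪ B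
  · by_cases hys : y ∈ A ∪ B
    · by_cases hxA : x ∈ A
      · by_cases hyA : y ∈ A
        · rw [phiFun_apply_A σ T hT hTc hxA, phiFun_apply_A σ T hT hTc hyA] at hxy
          have h1 := (Tᶜ.orderEmbOfFin hTc).injective ((emb (A ∪ B) σ).injective hxy)
          exact rk_inj A σ hxA hyA h1
        · have hyB : y ∈ B := (mem_union.1 hys).resolve_left hyA
          rw [phiFun_apply_A σ T hT hTc hxA, phiFun_apply_B σ T hT hTc hyB hyA] at hxy
          have h1 := (emb (A ∪ B) σ).injective hxy
          have h2 : Tᶜ.orderEmbOfFin hTc (rk A σ x hxA) ∈ Tᶜ := orderEmbOfFin_mem _ _ _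
          rw [h1] at h2
          exact absurd (orderEmbOfFin_mem T hT _) (mem_compl.1 h2)
      · have hxB : x ∈ B := (mem_union.1 hxs).resolve_left hxA
        by_cases hyA : y ∈ A
        · rw [phiFun_apply_B σ T hT hTc hxB hxA, phiFun_apply_A σ T hT hTc hyA] at hxy
          have h1 := (emb (A ∪ B) σ).injective hxy
          have h2 : Tᶜ.orderEmbOfFin hTc (rk A σ y hyA) ∈ Tᶜ := orderEmbOfFin_mem _ _ _
          rw [← h1] at h2
          exact absurd (orderEmbOfFin_mem T hT _) (mem_compl.1 h2)
        · have hyB : y ∈ B := (mem_union.1 hys).resolve_left hyA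
          rw [phiFun_apply_B σ T hT hTc hxB hxA, phiFun_apply_B σ T hT hTc hyB hyA] at hxy
          have h1 := (T.orderEmbOfFin hT).injective ((emb (A ∪ B) σ).injective hxy)
          exact rk_inj B σ hxB hyB h1
    · exfalso
      have h1 := phiFun_mem σ T hT hTc hxs
      rw [hxy] at h1
      rw [phiFun_apply_out σ T hT hTc (fun h => hys (mem_union_left _ h))
        (fun h => hys (mem_union_right _ h))] at h1
      exact hys ((mem_image_iff _ σ y).1 h1)
  · by_cases hys : y ∈ A ∪ B
    · exfalso
      have h1 := phiFun_mem σ T hT hTc hys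
      rw [← hxy] at h1
      rw [phiFun_apply_out σ T hT hTc (fun h => hxs (mem_union_left _ h))
        (fun h => hxs (mem_union_right _ h))] at h1
      exact hxs ((mem_image_iff _ σ x).1 h1)
    · rw [phiFun_apply_out σ T hT hTc (fun h => hxs (mem_union_left _ h))
        (fun h => hxs (mem_union_right _ h)),
        phiFun_apply_out σ T hT hTc (fun h => hys (mem_union_left _ h))
        (fun h => hys (mem_union_right _ h))] at hxy
      exact σ.injective hxy

/-- the rearranged permutation as an equivalence -/
noncomputable def phi (hn : Fintype.card E = n) : E ≃ Fin n :=
  Equiv.ofBijective (phiFun A B σ T hT hTc)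
    ((Fintype.bijective_iff_injective_and_card _).2
      ⟨phiFun_injective σ T hT hTc, by simp [hn]⟩)

lemma phi_apply (hn : Fintype.card E = n) (e : E) :
    phi σ T hT hTc hn e = phiFun A B σ T hT hTc e := rfl

variable (hn : Fintype.card E = n)

lemma image_phi : (A ∪ B).image (phi σ T hT hTc hn) = (A ∪ B).image σ :=
  eq_of_subset_of_card_le
    (fun x hx => by
      rcases mem_image.1 hx with ⟨e, he, rfl⟩
      exact phiFun_mem σ T hT hTc he)
    (by rw [card_image_equiv, card_image_equiv])

lemma emb_congr {t : Finset E} {σ τ : E ≃ Fin n} (h : t.image σ = t.image τ) (k : Fin t.card) :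
    emb t σ k = emb t τ k := by
  have h2 : (fun k => emb t σ k) = (t.image τ).orderEmbOfFin (card_image_equiv t τ) :=
    orderEmbOfFin_unique _ (fun x => h ▸ orderEmbOfFin_mem _ _ _) (emb t σ).strictMono
  exact congrFun h2 k

lemma emb_A_phi (k : Fin A.card) :
    emb A (phi σ T hT hTc hn) k = emb (A ∪ B) σ ((Tᶜ).orderEmbOfFin hTc k) := by
  have h2 : (fun k => emb (A ∪ B) σ ((Tᶜ).orderEmbOfFin hTc k)) =
      (A.image (phi σ T hT hTc hn)).orderEmbOfFin (card_image_equiv A _) := by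
    apply orderEmbOfFin_unique
    · intro k
      rcases rk_surj A σ k with ⟨e, he, hrk⟩
      exact mem_image.2 ⟨e, he, by rw [phi_apply, phiFun_apply_A σ T hT hTc he, hrk]⟩
    · exact (emb (A ∪ B) σ).strictMono.comp ((Tᶜ).orderEmbOfFin hTc).strictMono
  exact (congrFun h2 k).symm

lemma emb_B_phi (hd : Disjoint A B) (k : Fin B.card) :
    emb B (phi σ T hT hTc hn) k = emb (A ∪ B) σ (T.orderEmbOfFin hT k) := by
  have h2 : (fun k => emb (A ∪ B) σ (T.orderEmbOfFin hT k)) =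
      (B.image (phi σ T hT hTc hn)).orderEmbOfFin (card_image_equiv B _) := by
    apply orderEmbOfFin_unique
    · intro k
      rcases rk_surj B σ k with ⟨e, he, hrk⟩
      exact mem_image.2 ⟨e, he, by
        rw [phi_apply, phiFun_apply_B σ T hT hTc he (disjoint_right.1 hd he), hrk]⟩
    · exact (emb (A ∪ B) σ).strictMono.comp (T.orderEmbOfFin hT).strictMono
  exact (congrFun h2 k).symm

lemma rk_A_phi {e : E} (he : e ∈ A) :
    rk A (phi σ T hT hTc hn) e he = rk A σ e he := by
  apply rk_eq_of_emb
  rw [emb_A_phi σ T hT hTc hn, phi_apply, phiFun_apply_A σ T hT hTc he]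

lemma rk_B_phi (hd : Disjoint A B) {e : E} (he : e ∈ B) :
    rk B (phi σ T hT hTc hn) e he = rk B σ e he := by
  apply rk_eq_of_emb
  rw [emb_B_phi σ T hT hTc hn hd, phi_apply,
    phiFun_apply_B σ T hT hTc he (disjoint_right.1 hd he)]

/-- composition law: rearranging a rearranged permutation only depends on the last slots. -/
lemma phiFun_phi (hd : Disjoint A B) (T' : Finset (Fin (A ∪ B).card))
    (hT' : T'.card = B.card) (hTc' : T'ᶜ.card = A.card) (e : E) :
    phiFun A B (phi σ T hT hTc hn) T' hT' hTc' e = phiFun A B σ T' hT' hTc' e := by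
  by_cases hA : e ∈ A
  · rw [phiFun_apply_A _ T' hT' hTc' hA, phiFun_apply_A σ T' hT' hTc' hA,
      rk_A_phi σ T hT hTc hn hA, emb_congr (image_phi σ T hT hTc hn)]
  · by_cases hB : e ∈ B
    · rw [phiFun_apply_B _ T' hT' hTc' hB hA, phiFun_apply_B σ T' hT' hTc' hB hA,
        rk_B_phi σ T hT hTc hn hd hB, emb_congr (image_phi σ T hT hTc hn)]
    · rw [phiFun_apply_out _ T' hT' hTc' hA hB, phiFun_apply_out σ T' hT' hTc' hA hB,
        phi_apply, phiFun_apply_out σ T hT hTc hA hB]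

end Phi

section Tof

variable (A B : Finset E)

/-- The set of slots (relative positions within `A ∪ B`) occupied by `B`. -/
noncomputable def Tof (σ : E ≃ Fin n) : Finset (Fin (A ∪ B).card) :=
  B.attach.image (fun e => rk (A ∪ B) σ e.1 (mem_union_right _ e.2))

variable {A B} (σ : E ≃ Fin n)

lemma mem_Tof {x : Fin (A ∪ B).card} :
    x ∈ Tof A B σ ↔ ∃ e, ∃ he : e ∈ B, rk (A ∪ B) σ e (mem_union_right _ he) = x := by
  constructor
  · intro h
    rcases mem_image.1 h with ⟨e, -, he⟩
    exact ⟨e.1, e.2, he⟩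
  · rintro ⟨e, he, rfl⟩
    exact mem_image_of_mem _ (mem_attach _ ⟨e, he⟩)

lemma rk_mem_Tof {e : E} (he : e ∈ B) :
    rk (A ∪ B) σ e (mem_union_right _ he) ∈ Tof A B σ :=
  (mem_Tof σ).2 ⟨e, he, rfl⟩

lemma rk_A_not_mem_Tof (hd : Disjoint A B) {e : E} (he : e ∈ A) :
    rk (A ∪ B) σ e (mem_union_left _ he) ∉ Tof A B σ := by
  intro h
  rcases (mem_Tof σ).1 h with ⟨f, hf, hrk⟩
  have := rk_inj (A ∪ B) σ _ _ hrk
  exact disjoint_left.1 hd he (this ▸ hf)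

lemma card_Tof : (Tof A B σ).card = B.card := by
  rw [Tof, card_image_of_injOn, card_attach]
  intro e _ f _ h
  exact Subtype.ext (rk_inj (A ∪ B) σ _ _ h)

lemma Tof_phi (hd : Disjoint A B) (T : Finset (Fin (A ∪ B).card))
    (hT : T.card = B.card) (hTc : Tᶜ.card = A.card) (hn : Fintype.card E = n) :
    Tof A B (phi σ T hT hTc hn) = T := by
  apply eq_of_subset_of_card_le
  · intro x hx
    rcases (mem_Tof _).1 hx with ⟨f, hf, hrk⟩
    have hfA : f ∉ A := disjoint_right.1 hd hf
    have heq : rk (A ∪ B) (phi σ T hT hTc hn) f (mem_union_right _ hf) =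
        T.orderEmbOfFin hT (rk B σ f hf) := by
      apply rk_eq_of_emb
      rw [emb_congr (image_phi σ T hT hTc hn), phi_apply,
        phiFun_apply_B σ T hT hTc hf hfA]
    rw [← hrk, heq]
    exact orderEmbOfFin_mem _ _ _
  · rw [card_Tof, hT]

lemma symm_emb_mem (t : Finset E) (k : Fin t.card) : σ.symm (emb t σ k) ∈ t := by
  have hmem : emb t σ k ∈ t.image σ := orderEmbOfFin_mem _ _ _
  rcases mem_image.1 hmem with ⟨a, ha, haa⟩
  rw [← haa, σ.symm_apply_apply]
  exact ha

/-- reconstruction: rearranging σ according to its own slots gives back σ. -/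
lemma phiFun_Tof (hd : Disjoint A B) (T' : Finset (Fin (A ∪ B).card))
    (hT' : T'.card = B.card) (hTc' : T'ᶜ.card = A.card) (hE : T' = Tof A B σ) (e : E) :
    phiFun A B σ T' hT' hTc' e = σ e := by
  subst hE
  by_cases hA : e ∈ A
  · rw [phiFun_apply_A σ _ hT' hTc' hA]
    set gA : Fin A.card → Fin (A ∪ B).card := fun k =>
      rk (A ∪ B) σ (σ.symm (emb A σ k)) (mem_union_left _ (symm_emb_mem σ A k)) with hgA
    have hkey : ∀ k, emb (A ∪ B) σ (gA k) = emb A σ k := by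
      intro k
      rw [hgA, emb_rk, σ.apply_symm_apply]
    have hmono : StrictMono gA := by
      intro k l hkl
      rw [← (emb (A ∪ B) σ).lt_iff_lt, hkey, hkey]
      exact (emb A σ).strictMono hkl
    have hmem : ∀ k, gA k ∈ (Tof A B σ)ᶜ := by
      intro k
      rw [mem_compl]
      exact rk_A_not_mem_Tof σ hd (symm_emb_mem σ A k)
    have huniq : gA = ((Tof A B σ)ᶜ).orderEmbOfFin hTc' :=
      orderEmbOfFin_unique _ hmem hmono
    rw [← huniq, hkey, emb_rk]
  · by_cases hB : e ∈ B
    · rw [phiFun_apply_B σ _ hT' hTc' hB hA]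
      set gB : Fin B.card → Fin (A ∪ B).card := fun k =>
        rk (A ∪ B) σ (σ.symm (emb B σ k)) (mem_union_right _ (symm_emb_mem σ B k)) with hgB
      have hkey : ∀ k, emb (A ∪ B) σ (gB k) = emb B σ k := by
        intro k
        rw [hgB, emb_rk, σ.apply_symm_apply]
      have hmono : StrictMono gB := by
        intro k l hkl
        rw [← (emb (A ∪ B) σ).lt_iff_lt, hkey, hkey]
        exact (emb B σ).strictMono hkl
      have hmem : ∀ k, gB k ∈ Tof A B σ := by
        intro k
        exact rk_mem_Tof σ (symm_emb_mem σ B k)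
      have huniq : gB = (Tof A B σ).orderEmbOfFin hT' :=
        orderEmbOfFin_unique _ hmem hmono
      rw [← huniq, hkey, emb_rk]
    · exact phiFun_apply_out σ _ hT' hTc' hA hB

end Tof

section T0

variable (A B : Finset E)

/-- the canonical slot set: the top `B.card` slots. -/
def T0 : Finset (Fin (A ∪ B).card) := univ.filter (fun k => A.card ≤ (k : ℕ))

variable {A B}

lemma hAN : A.card ≤ (A ∪ B).card := card_le_card subset_union_left

lemma T0_compl : (T0 A B)ᶜ = univ.filter (fun k : Fin (A ∪ B).card => (k : ℕ) < A.card) := by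
  ext x
  simp [T0, not_le]

lemma card_T0_compl : (T0 A B)ᶜ.card = A.card := by
  rw [T0_compl, card_filter_val_lt hAN]

lemma card_s (hd : Disjoint A B) : (A ∪ B).card = A.card + B.card :=
  card_union_of_disjoint hd

lemma card_T0 (hd : Disjoint A B) : (T0 A B).card = B.card := by
  have h1 : (T0 A B).card + ((T0 A B)ᶜ).card = (A ∪ B).card := by
    rw [card_add_card_compl, Fintype.card_fin]
  have h2 := card_T0_compl (A := A) (B := B)
  have h3 := card_s hd
  omega

lemma orderEmbOfFin_T0_compl (h : (T0 A B)ᶜ.card = A.card) (k : Fin A.card) :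
    ((T0 A B)ᶜ).orderEmbOfFin h k = (⟨k.1, lt_of_lt_of_le k.2 hAN⟩ : Fin (A ∪ B).card) := by
  have h2 : (fun k : Fin A.card => (⟨k.1, lt_of_lt_of_le k.2 hAN⟩ : Fin (A ∪ B).card)) =
      ((T0 A B)ᶜ).orderEmbOfFin h := by
    apply orderEmbOfFin_unique
    · intro k
      rw [T0_compl, mem_filter]
      exact ⟨mem_univ _, k.2⟩
    · intro a b hab
      rw [Fin.lt_def]
      exact hab
  exact (congrFun h2 k).symm

lemma good_iff (hd : Disjoint A B) (σ : E ≃ Fin n) :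
    GoodAB A B σ ↔ Tof A B σ = T0 A B := by
  constructor
  · intro hgood
    apply eq_of_subset_of_card_le
    · intro x hx
      rcases (mem_Tof σ).1 hx with ⟨f, hf, hrk⟩
      rw [T0, mem_filter]
      refine ⟨mem_univ _, ?_⟩
      -- each element of A has rank strictly below x
      have hsub : ∀ a ∈ A.attach,
          rk (A ∪ B) σ a.1 (mem_union_left _ a.2) ∈
            univ.filter (fun k : Fin (A ∪ B).card => (k : ℕ) < (x : ℕ)) := by
        intro a _
        rw [mem_filter]
        refine ⟨mem_univ _, ?_⟩
        have hlt : σ a.1 < σ f := hgood a.1 a.2 f hf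
        have := (rk_lt_rk (A ∪ B) σ (mem_union_left _ a.2) (mem_union_right _ hf)).2 hlt
        rw [hrk] at this
        exact this
      have hinj : Set.InjOn (fun a : {e // e ∈ A} =>
          rk (A ∪ B) σ a.1 (mem_union_left _ a.2)) ↑A.attach := by
        intro a _ b _ hab
        exact Subtype.ext (rk_inj (A ∪ B) σ _ _ hab)
      have hcard := card_le_card_of_injOn _ hsub hinj
      rwa [card_attach, card_filter_val_lt (le_of_lt x.2)] at hcard
    · rw [card_Tof, card_T0 hd]
  · intro h e heA f hfB
    have h1 : rk (A ∪ B) σ f (mem_union_right _ hfB) ∈ T0 A B := h ▸ rk_mem_Tof σ hfB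
    have h2 : rk (A ∪ B) σ e (mem_union_left _ heA) ∉ T0 A B := h ▸ rk_A_not_mem_Tof σ hd heA
    rw [T0, mem_filter] at h1 h2
    simp only [mem_univ, true_and, not_le] at h1 h2
    have : rk (A ∪ B) σ e (mem_union_left _ heA) < rk (A ∪ B) σ f (mem_union_right _ hfB) := by
      rw [Fin.lt_def]; omega
    exact (rk_lt_rk (A ∪ B) σ _ _).1 this

/-- key monotonicity: any rearrangement of a good permutation moves `A`-elements later. -/
lemma le_phiFun (hd : Disjoint A B) (σ : E ≃ Fin n) (hgood : GoodAB A B σ)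
    (T : Finset (Fin (A ∪ B).card)) (hT : T.card = B.card) (hTc : Tᶜ.card = A.card)
    {e : E} (he : e ∈ A) : σ e ≤ phiFun A B σ T hT hTc e := by
  have hTof := (good_iff hd σ).1 hgood
  have h0 : σ e = phiFun A B σ (T0 A B) (card_T0 hd) card_T0_compl e :=
    (phiFun_Tof σ hd _ _ _ hTof.symm e).symm
  rw [h0, phiFun_apply_A σ _ _ _ he, phiFun_apply_A σ T hT hTc he,
    orderEmbOfFin_T0_compl]
  apply (emb (A ∪ B) σ).monotone
  rw [Fin.le_def]
  exact le_apply_of_strictMono ((Tᶜ).orderEmbOfFin hTc).strictMono _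

end T0

section Count

variable {A B : Finset E}

lemma card_compl_T (hd : Disjoint A B) {T : Finset (Fin (A ∪ B).card)}
    (hT : T.card = B.card) : Tᶜ.card = A.card := by
  rw [card_compl, Fintype.card_fin, hT, card_s hd]
  omega

/-- the fundamental bijection: (good permutation, slot set) ≃ permutation. -/
noncomputable def theta (A B : Finset E) (hd : Disjoint A B) (hn : Fintype.card E = n) :
    ({σ : E ≃ Fin n // GoodAB A B σ} ×
      {T : Finset (Fin (A ∪ B).card) // T.card = B.card}) ≃ (E ≃ Fin n) where
  toFun p := phi p.1.1 p.2.1 p.2.2 (card_compl_T hd p.2.2) hn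
  invFun τ := (⟨phi τ (T0 A B) (card_T0 hd) card_T0_compl hn,
      (good_iff hd _).2 (Tof_phi τ hd _ _ _ hn)⟩,
    ⟨Tof A B τ, card_Tof τ⟩)
  left_inv p := by
    rcases p with ⟨⟨σ, hgood⟩, ⟨T, hT⟩⟩
    apply Prod.ext
    · apply Subtype.ext
      apply Equiv.ext
      intro x
      show phiFun A B (phi σ T hT (card_compl_T hd hT) hn) (T0 A B) _ _ x = σ x
      rw [phiFun_phi σ T hT (card_compl_T hd hT) hn hd]
      exact phiFun_Tof σ hd _ _ _ ((good_iff hd σ).1 hgood).symm x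
    · apply Subtype.ext
      exact Tof_phi σ hd T hT _ hn
  right_inv τ := by
    apply Equiv.ext
    intro x
    show phiFun A B (phi τ (T0 A B) (card_T0 hd) card_T0_compl hn) (Tof A B τ) _ _ x = τ x
    rw [phiFun_phi τ (T0 A B) (card_T0 hd) card_T0_compl hn hd]
    exact phiFun_Tof τ hd _ _ _ rfl x

lemma count_choose (hd : Disjoint A B) (hn : Fintype.card E = n) :
    Nat.card {σ : E ≃ Fin n // GoodAB A B σ} * (A.card + B.card).choose B.card =
      n.factorial := by
  have h1 := Nat.card_congr (theta A B hd hn)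
  rw [Nat.card_prod] at h1
  have h2 : Nat.card {T : Finset (Fin (A ∪ B).card) // T.card = B.card} =
      (A.card + B.card).choose B.card := by
    rw [Nat.card_eq_fintype_card, Fintype.card_finset_len, Fintype.card_fin, card_s hd]
  have h3 : Nat.card (E ≃ Fin n) = n.factorial := by
    rw [Nat.card_eq_fintype_card, Fintype.card_equiv (Fintype.equivFinOfCardEq hn), hn]
  rw [h2, h3] at h1
  exact h1

lemma count_le (hd : Disjoint A B) (hn : Fintype.card E = n) (Q : (E ≃ Fin n) → Prop)
    (hQ : ∀ σ τ : E ≃ Fin n, (∀ e, e ∉ A ∪ B → τ e = σ e) → (∀ e ∈ A, σ e ≤ τ e) →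
      Q σ → Q τ) :
    Nat.card {σ : E ≃ Fin n // Q σ ∧ GoodAB A B σ} * (A.card + B.card).choose B.card ≤
      Nat.card {σ : E ≃ Fin n // Q σ} := by
  classical
  set f : {σ : E ≃ Fin n // Q σ ∧ GoodAB A B σ} ×
      {T : Finset (Fin (A ∪ B).card) // T.card = B.card} → {σ : E ≃ Fin n // Q σ} :=
    fun p => ⟨phi p.1.1 p.2.1 p.2.2 (card_compl_T hd p.2.2) hn,
      hQ p.1.1 _
        (fun e he => by
          rw [phi_apply]
          exact phiFun_apply_out _ _ _ _ (fun h => he (mem_union_left _ h))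
            (fun h => he (mem_union_right _ h)))
        (fun e heA => by
          rw [phi_apply]
          exact le_phiFun hd _ p.1.2.2 _ _ _ heA)
        p.1.2.1⟩ with hf
  have hinj : Function.Injective f := by
    intro p q hpq
    have h1 : theta A B hd hn (⟨p.1.1, p.1.2.2⟩, p.2) = theta A B hd hn (⟨q.1.1, q.1.2.2⟩, q.2) := by
      have := congrArg Subtype.val hpq
      exact this
    have h2 := (theta A B hd hn).injective h1
    have h3 : p.1.1 = q.1.1 :=
      congrArg (fun x : {σ : E ≃ Fin n // GoodAB A B σ} ×
        {T : Finset (Fin (A ∪ B).card) // T.card = B.card} => x.1.1) h2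
    have h4 : p.2 = q.2 :=
      congrArg (fun x : {σ : E ≃ Fin n // GoodAB A B σ} ×
        {T : Finset (Fin (A ∪ B).card) // T.card = B.card} => x.2) h2
    exact Prod.ext (Subtype.ext h3) h4
  have hle := Nat.card_le_card_of_injective f hinj
  rw [Nat.card_prod] at hle
  have h2 : Nat.card {T : Finset (Fin (A ∪ B).card) // T.card = B.card} =
      (A.card + B.card).choose B.card := by
    rw [Nat.card_eq_fintype_card, Fintype.card_finset_len, Fintype.card_fin, card_s hd]
  rwa [h2] at hle

end Count

end Stmt4Aux

open Finset Stmt4Aux in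
/-- let `D` be a finite dag with vertices enumerated
`en 0, …, en (k-1)` in topological order and `σ` a uniformly random
permutation of the arcs; `G_j` is the event that vertex `en j` is good.
Then `Pr(G_j ∣ G_0 ∩ … ∩ G_{j-1}) ≤ Pr(G_j) = C(i+o, o)⁻¹` (assuming the
conditioning event has positive probability), stated via counting:
`#{σ : prev ∧ G_j} · C(i+o,o) ≤ #{σ : prev}` and
`#{σ : G_j} · C(i+o,o) = (#arcs)!`. -/
theorem stmt4 {V E : Type*} [Fintype V] [Fintype E]
    (src dst : E → V)
    (hacyc : ∀ v : V, ¬ Relation.TransGen (vStep src dst) v v)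
    (en : Fin (Fintype.card V) ≃ V)
    (htopo : ∀ e : E, en.symm (src e) < en.symm (dst e))
    (j : Fin (Fintype.card V))
    (hpos : 0 < Nat.card {σ : E ≃ Fin (Fintype.card E) //
      ∀ l : Fin (Fintype.card V), l < j → IsGood src dst (en l) σ}) :
    Nat.card {σ : E ≃ Fin (Fintype.card E) //
          (∀ l : Fin (Fintype.card V), l < j → IsGood src dst (en l) σ) ∧
          IsGood src dst (en j) σ} *
        Nat.choose (inDeg dst (en j) + outDeg src (en j)) (outDeg src (en j)) ≤
      Nat.card {σ : E ≃ Fin (Fintype.card E) //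
          ∀ l : Fin (Fintype.card V), l < j → IsGood src dst (en l) σ} ∧
    Nat.card {σ : E ≃ Fin (Fintype.card E) // IsGood src dst (en j) σ} *
        Nat.choose (inDeg dst (en j) + outDeg src (en j)) (outDeg src (en j)) =
      Nat.factorial (Fintype.card E) := by

  classical
  set n := Fintype.card E with hn0
  set v := en j with hv
  set A : Finset E := univ.filter (fun e => dst e = v) with hA
  set B : Finset E := univ.filter (fun e => src e = v) with hB
  have hd : Disjoint A B := by
    rw [Finset.disjoint_left]
    intro e heA heB
    rw [hA, mem_filter] at heA
    rw [hB, mem_filter] at heB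
    have h2 := htopo e
    rw [heA.2, heB.2] at h2
    exact lt_irrefl _ h2
  have hgood_iff : ∀ σ : E ≃ Fin n, IsGood src dst v σ ↔ Stmt4Aux.GoodAB A B σ := by
    intro σ
    constructor
    · intro h e heA f hfB
      rw [hA, mem_filter] at heA
      rw [hB, mem_filter] at hfB
      exact h e f heA.2 hfB.2
    · intro h e f he hf
      exact h e (by rw [hA, mem_filter]; exact ⟨mem_univ _, he⟩) f
        (by rw [hB, mem_filter]; exact ⟨mem_univ _, hf⟩)
  have hiA : inDeg dst v = A.card := by
    rw [inDeg, Nat.card_eq_fintype_card, Fintype.card_subtype]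
  have hoB : outDeg src v = B.card := by
    rw [outDeg, Nat.card_eq_fintype_card, Fintype.card_subtype]
  set Q : (E ≃ Fin n) → Prop :=
    fun σ => ∀ l : Fin (Fintype.card V), l < j → IsGood src dst (en l) σ with hQdef
  have hQ : ∀ σ τ : E ≃ Fin n, (∀ e, e ∉ A ∪ B → τ e = σ e) → (∀ e ∈ A, σ e ≤ τ e) →
      Q σ → Q τ := by
    intro σ τ hoff hup hQσ l hl e f hde hsf
    have heA : e ∉ A := by
      intro h
      have h1 : dst e = v := (mem_filter.1 h).2
      have h2 : en l = en j := by rw [← hde, h1, hv]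
      exact absurd (en.injective h2) (ne_of_lt hl)
    have heB : e ∉ B := by
      intro h
      have h1 : src e = v := (mem_filter.1 h).2
      have h2 := htopo e
      rw [h1, hde, hv] at h2
      simp only [Equiv.symm_apply_apply] at h2
      exact absurd hl (not_lt.2 h2.le)
    have hfB : f ∉ B := by
      intro h
      have h1 : src f = v := (mem_filter.1 h).2
      have h2 : en l = en j := by rw [← hsf, h1, hv]
      exact absurd (en.injective h2) (ne_of_lt hl)
    have he' : τ e = σ e := hoff e (by
      rw [mem_union]
      rintro (h | h)
      exacts [heA h, heB h])
    have hlt : σ e < σ f := hQσ l hl e f hde hsf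
    by_cases hfA : f ∈ A
    · have := hup f hfA
      rw [he']
      exact lt_of_lt_of_le hlt this
    · have hf' : τ f = σ f := hoff f (by
        rw [mem_union]
        rintro (h | h)
        exacts [hfA h, hfB h])
      rw [he', hf']
      exact hlt
  rw [hiA, hoB]
  constructor
  · have h := Stmt4Aux.count_le hd hn0.symm Q hQ
    have e1 : Nat.card {σ : E ≃ Fin n //
          (∀ l : Fin (Fintype.card V), l < j → IsGood src dst (en l) σ) ∧
          IsGood src dst v σ} =
        Nat.card {σ : E ≃ Fin n // Q σ ∧ Stmt4Aux.GoodAB A B σ} :=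
      Nat.card_congr (Equiv.subtypeEquivRight
        (fun σ => and_congr_right (fun _ => hgood_iff σ)))
    rw [e1]
    exact h
  · have h := Stmt4Aux.count_choose hd hn0.symm
    have e1 : Nat.card {σ : E ≃ Fin n // IsGood src dst v σ} =
        Nat.card {σ : E ≃ Fin n // Stmt4Aux.GoodAB A B σ} :=
      Nat.card_congr (Equiv.subtypeEquivRight (fun σ => hgood_iff σ))
    rw [e1]
    exact h
end

section
/- For every ℓ ≥ 1 there exists an N-free order R_ℓ with 3ℓ elements whose arc diagram has width 1 but whose activity α(R_ℓ) is at least ℓ; hence bounded width of the arc diagram does not imply bounded activity. -/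
/-- The active set after the first `i` elements of the listing `L` of the
arcs. -/
def activeSet {V E : Type*} {n : ℕ} (src dst : E → V) (L : E ≃ Fin n) (i : ℕ) :
    Set V :=
  {v : V | ∃ a b : E, ((L a : ℕ) < i ∧ i ≤ (L b : ℕ)) ∧ dst a = v ∧ src b = v}

theorem transGen_vStep_lt {V E : Type*} [Preorder V] {src dst : E → V}
    (h : ∀ e, src e < dst e) {u v : V} (huv : Relation.TransGen (vStep src dst) u v) : u < v := by
  induction huv with
  | single hstep => obtain ⟨e, rfl, rfl⟩ := hstep; exact h e
  | tail _ hstep ih => obtain ⟨e, rfl, rfl⟩ := hstep; exact ih.trans (h e)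

theorem Fin.transGen_of_lt {n : ℕ} (r : Fin n → Fin n → Prop)
    (h : ∀ i j : Fin n, (i : ℕ) + 1 = j → r i j) {a b : Fin n} (hab : a < b) :
    Relation.TransGen r a b := by
  refine transGen_of_succ_of_lt r (fun i hi => ?_) hab
  have hi : (i : ℕ) + 1 < n := by have := hi.2; omega
  have hcov : i ⋖ ⟨i + 1, hi⟩ := Fin.covBy_iff.2 (Nat.covBy_iff_add_one_eq.2 rfl)
  rw [Order.succ_eq_of_covBy hcov]
  exact h _ _ rfl

theorem Fin.le_ncard_of_mem_or_rev_mem {ℓ : ℕ} {A : Set (Fin (2 * ℓ + 1))}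
    (hA : ∀ j : Fin ℓ, (⟨j + 1, by omega⟩ : Fin (2 * ℓ + 1)) ∈ A ∨
      (⟨j + 1, by omega⟩ : Fin (2 * ℓ + 1)).rev ∈ A) :
    ℓ ≤ A.ncard := by
  classical
  let pick : Fin ℓ → A := fun j =>
    if hj : (⟨j + 1, by omega⟩ : Fin (2 * ℓ + 1)) ∈ A then ⟨_, hj⟩ else ⟨_, (hA j).resolve_left hj⟩
  have pick_val : ∀ j, (pick j : ℕ) = j + 1 ∨ (pick j : ℕ) = 2 * ℓ - (j + 1) := by
    intro j
    simp only [pick]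
    split_ifs
    · exact Or.inl rfl
    · exact Or.inr (by simp [Fin.val_rev])
  have pick_inj : Function.Injective pick := by
    intro j k hjk
    have hval : (pick j : ℕ) = pick k := by rw [hjk]
    ext
    rcases pick_val j with hj | hj <;> rcases pick_val k with hk | hk <;> omega
  simpa only [Nat.card_coe_set_eq, Nat.card_fin] using Nat.card_le_card_of_injective pick pick_inj

namespace PathNested

-- `inl a` is the path arc `a → a + 1`, `inr x` the nested arc `x → 2ℓ - x`.
abbrev Arc (ℓ : ℕ) : Type := Fin (2 * ℓ) ⊕ Fin ℓ

def src (ℓ : ℕ) : Arc ℓ → Fin (2 * ℓ + 1) :=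
  Sum.elim Fin.castSucc (Fin.castLE (by omega))

def dst (ℓ : ℕ) : Arc ℓ → Fin (2 * ℓ + 1) :=
  Sum.elim Fin.succ fun k => (Fin.castLE (by omega) k).rev

theorem src_lt_dst {ℓ : ℕ} : ∀ e : Arc ℓ, src ℓ e < dst ℓ e
  | .inl a => Fin.castSucc_lt_succ
  | .inr k => by
    rw [Fin.lt_def]
    simp only [src, dst, Sum.elim_inr, Fin.val_rev, Fin.val_castLE]
    omega

theorem card_arc (ℓ : ℕ) : Fintype.card (Arc ℓ) = 3 * ℓ := by
  simp only [Fintype.card_sum, Fintype.card_fin]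
  ring

theorem transGen_vStep_of_lt {ℓ : ℕ} {u v : Fin (2 * ℓ + 1)} (huv : u < v) :
    Relation.TransGen (vStep (src ℓ) (dst ℓ)) u v :=
  Fin.transGen_of_lt _ (fun i j hij => ⟨.inl ⟨i, by omega⟩, rfl, Fin.ext (by simp [dst, hij])⟩) huv

theorem lineLT_inl_of_lt {ℓ : ℕ} {a b : Fin (2 * ℓ)} (hab : a < b) :
    lineLT (src ℓ) (dst ℓ) (.inl a) (.inl b) :=
  (Fin.transGen_of_lt (fun i j => dst ℓ (.inl i) = src ℓ (.inl j))
    (fun i j hij => Fin.ext (by simp [src, dst, hij])) hab).lift Sum.inl fun _ _ => id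

section Activity

variable {ℓ n : ℕ} {L : Arc ℓ ≃ Fin n}

theorem strictMono_inl
    (hL : ∀ x y : Arc ℓ, lineLT (src ℓ) (dst ℓ) x y → L x < L y) :
    StrictMono fun a : Fin (2 * ℓ) => L (.inl a) :=
  fun _ _ hab => hL _ _ (lineLT_inl_of_lt hab)

theorem mem_activeSet_of_le_src
    (hL : ∀ x y : Arc ℓ, lineLT (src ℓ) (dst ℓ) x y → L x < L y)
    {m : Fin (2 * ℓ)} {e : Arc ℓ} (he : L (.inl m) ≤ L e)
    (hpos : 0 < (src ℓ e : ℕ)) (hle : (src ℓ e : ℕ) ≤ m) :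
    src ℓ e ∈ activeSet (src ℓ) (dst ℓ) L (L (.inl m)) := by
  refine ⟨.inl ⟨src ℓ e - 1, by omega⟩, e, ⟨strictMono_inl hL ?_, he⟩, Fin.ext ?_, rfl⟩
  · rw [Fin.lt_def]
    dsimp only
    omega
  · simp only [dst, Sum.elim_inl, Fin.val_succ]
    omega

theorem mem_activeSet_of_dst_le
    (hL : ∀ x y : Arc ℓ, lineLT (src ℓ) (dst ℓ) x y → L x < L y)
    {m : Fin (2 * ℓ)} {e : Arc ℓ} (he : L e < L (.inl m))
    (hle : (m : ℕ) ≤ dst ℓ e) (hlt : (dst ℓ e : ℕ) < 2 * ℓ) :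
    dst ℓ e ∈ activeSet (src ℓ) (dst ℓ) L (L (.inl m)) :=
  ⟨e, .inl ⟨dst ℓ e, hlt⟩, ⟨he, (strictMono_inl hL).monotone (Fin.le_def.2 hle)⟩, rfl, rfl⟩

theorem exists_le_ncard_activeSet (hℓ : 1 ≤ ℓ)
    (hL : ∀ x y : Arc ℓ, lineLT (src ℓ) (dst ℓ) x y → L x < L y) :
    ∃ i, ℓ ≤ (activeSet (src ℓ) (dst ℓ) L i).ncard := by
  let m : Fin (2 * ℓ) := ⟨ℓ, by omega⟩
  refine ⟨L (.inl m), Fin.le_ncard_of_mem_or_rev_mem fun j => ?_⟩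
  by_cases hj : (j : ℕ) + 1 = ℓ
  · have hsrc : src ℓ (.inl m) = ⟨j + 1, by omega⟩ := Fin.ext hj.symm
    refine .inl (hsrc ▸ mem_activeSet_of_le_src hL le_rfl ?_ ?_) <;>
      simp only [hsrc, m] <;> omega
  · let e : Arc ℓ := .inr ⟨j + 1, by omega⟩
    have hsrc : src ℓ e = ⟨j + 1, by omega⟩ := rfl
    have hdst : dst ℓ e = (⟨j + 1, by omega⟩ : Fin (2 * ℓ + 1)).rev := rfl
    rcases lt_or_ge (L e) (L (.inl m)) with he | he
    · refine .inr (hdst ▸ mem_activeSet_of_dst_le hL he ?_ ?_) <;>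
        simp only [hdst, Fin.val_rev, m] <;> omega
    · refine .inl (hsrc ▸ mem_activeSet_of_le_src hL he ?_ ?_) <;>
        simp only [hsrc, m] <;> omega

end Activity

end PathNested

/-- for every `ℓ ≥ 1` there is an N-free order `R_ℓ` with `3ℓ`
elements, given as the line-digraph order of a dag whose transitive-closure
order on vertices is a chain (width 1), such that every linear extension of
`R_ℓ` has some active set of size at least `ℓ`; i.e. `α(R_ℓ) ≥ ℓ`.  Hence
bounded width of the arc diagram does not imply bounded activity. -/
theorem stmt10 (ℓ : ℕ) (hℓ : 1 ≤ ℓ) :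
    ∃ (V E : Type) (fV : Fintype V) (fE : Fintype E) (src dst : E → V),
      (∀ v : V, ¬ Relation.TransGen (vStep src dst) v v) ∧
      (@Fintype.card E fE = 3 * ℓ) ∧
      (∀ u v : V, u = v ∨ Relation.TransGen (vStep src dst) u v ∨
        Relation.TransGen (vStep src dst) v u) ∧
      ∀ L : E ≃ Fin (@Fintype.card E fE),
        (∀ x y : E, lineLT src dst x y → L x < L y) →
        ∃ i : ℕ, ℓ ≤ (activeSet src dst L i).ncard := by
  refine ⟨Fin (2 * ℓ + 1), PathNested.Arc ℓ, inferInstance, inferInstance,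
    PathNested.src ℓ, PathNested.dst ℓ, fun v hv => ?_, PathNested.card_arc ℓ, fun u v => ?_,
    fun L hL => PathNested.exists_le_ncard_activeSet hℓ hL⟩
  · exact (transGen_vStep_lt PathNested.src_lt_dst hv).false
  · rcases lt_trichotomy u v with huv | rfl | hvu
    · exact .inr (.inl (PathNested.transGen_vStep_of_lt huv))
    · exact .inl rfl
    · exact .inr (.inr (PathNested.transGen_vStep_of_lt hvu))
end

section
/- Let D be a finite directed acyclic graph and define, for vertices u,v, spread(u,v) = 0 if there is no pair of interiorly disjoint directed u-to-v paths, and otherwise the maximum, over pairs (p,q) of directed u-to-v paths sharing no interior vertices, of | length(p) − length(q) |. Let spread(D) = max over all pairs (u,v) of spread(u,v). Then for every N-free order P, the activity satisfies α(P) ≤ width(A(P)) · (spread(A(P)) + 2). -/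
/-- A directed path of length `m` (counting arcs) through the vertices
`p 0, p 1, …, p m`. -/
def IsDipath {V E : Type*} (src dst : E → V) (m : ℕ) (p : Fin (m + 1) → V) : Prop :=
  ∀ i : Fin m, ∃ e : E, src e = p i.castSucc ∧ dst e = p i.succ

/-!
Let `level v` be the length of a longest directed path ending at `v`. Ordering the arcs by the
level of their tails gives a linear extension. Levels increase strictly along arcs, so each level
is an antichain and has at most `k` vertices. The spread bounds how much an arc `u → v` can skip:
a longest path to `v` and a longest path to `u` followed by the arc both start at the unique
source, and from their last common vertex on they are interiorly disjoint, so
`level v ≤ level u + s + 1`. A vertex active at some moment has an incoming arc listed before an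
outgoing arc of any other active vertex, hence the active levels span an interval of at most
`s + 2` values.
-/

theorem Fintype.exists_equivFin_lt_of_lt {α β : Type*} [Fintype α] [LinearOrder β] (f : α → β) :
    ∃ L : α ≃ Fin (Fintype.card α), ∀ a b, f a < f b → L a < L b := by
  let g := f ∘ (Fintype.equivFin α).symm
  refine ⟨(Fintype.equivFin α).trans (Tuple.sort g).symm, fun a b hab => ?_⟩
  by_contra! hba
  have := Tuple.monotone_sort g hba
  simp only [Function.comp_apply, Equiv.trans_apply, Equiv.apply_symm_apply,
    Equiv.symm_apply_apply, g] at this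
  exact this.not_gt hab

theorem Finset.card_le_of_forall_le_add {s : Finset ℕ} {r : ℕ}
    (h : ∀ x ∈ s, ∀ y ∈ s, x ≤ y + r) : s.card ≤ r + 1 := by
  rcases s.eq_empty_or_nonempty with rfl | hs
  · simp
  calc s.card ≤ (Finset.Icc (s.min' hs) (s.min' hs + r)).card :=
        Finset.card_le_card fun x hx =>
          Finset.mem_Icc.2 ⟨s.min'_le x hx, h x hx _ (s.min'_mem hs)⟩
    _ = r + 1 := by rw [Nat.card_Icc]; omega

theorem Finset.card_le_mul_of_card_fiber_le {α : Type*} (s : Finset α) (f : α → ℕ) {k r : ℕ}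
    (hfiber : ∀ c, (s.filter (f · = c)).card ≤ k) (hspan : ∀ a ∈ s, ∀ b ∈ s, f a ≤ f b + r) :
    s.card ≤ k * (r + 1) := by
  refine (s.card_le_mul_card_image k fun c _ => hfiber c).trans (Nat.mul_le_mul_left k ?_)
  refine Finset.card_le_of_forall_le_add ?_
  simp only [Finset.mem_image]
  rintro _ ⟨a, ha, rfl⟩ _ ⟨b, hb, rfl⟩
  exact hspan a ha b hb

theorem exists_last_common_index {V : Type*} (p q : ℕ → V) {m n : ℕ} (hm : 0 < m) (hn : 0 < n)
    (h0 : p 0 = q 0) :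
    ∃ i < m, ∃ j < n, p i = q j ∧ ∀ a, i < a → a < m → ∀ b < n, p a ≠ q b := by
  classical
  let P : ℕ → Prop := fun i => ∃ j < n, p i = q j
  obtain ⟨j, hj, hij⟩ : P (Nat.findGreatest P (m - 1)) :=
    Nat.findGreatest_spec (Nat.zero_le _) ⟨0, hn, h0⟩
  refine ⟨Nat.findGreatest P (m - 1), by have := Nat.findGreatest_le (P := P) (m - 1); omega,
    j, hj, hij, fun a hia ham b hb hab => ?_⟩
  exact Nat.findGreatest_is_greatest hia (by omega) ⟨b, hb, hab⟩

namespace ArcDiagram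

variable {V E : Type*} {src dst : E → V}

/-- Walks are indexed by `ℕ` (entries past `m` are ignored) so that they can be shifted and
extended without `Fin` casts. -/
def IsWalk (src dst : E → V) (m : ℕ) (p : ℕ → V) : Prop :=
  ∀ i < m, vStep src dst (p i) (p (i + 1))

def SpreadLE (src dst : E → V) (s : ℕ) : Prop :=
  ∀ (u v : V) (m m' : ℕ) (p : Fin (m + 1) → V) (q : Fin (m' + 1) → V),
    IsDipath src dst m p → IsDipath src dst m' q →
    p 0 = u → q 0 = u → p (Fin.last m) = v → q (Fin.last m') = v →
    (∀ (a : Fin (m + 1)) (b : Fin (m' + 1)),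
      0 < (a : ℕ) → (a : ℕ) < m → 0 < (b : ℕ) → (b : ℕ) < m' → p a ≠ q b) →
    m ≤ m' + s ∧ m' ≤ m + s

def WidthLE (src dst : E → V) (k : ℕ) : Prop :=
  ∀ S : Finset V, (∀ u ∈ S, ∀ w ∈ S, u ≠ w → ¬ Relation.TransGen (vStep src dst) u w) →
    S.card ≤ k

namespace IsWalk

variable {m : ℕ} {p : ℕ → V}

theorem drop (h : IsWalk src dst m p) (i : ℕ) : IsWalk src dst (m - i) (fun j => p (i + j)) :=
  fun j hj => by simpa only [Nat.add_assoc] using h (i + j) (by omega)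

theorem snoc (h : IsWalk src dst m p) {v : V} (hv : vStep src dst (p m) v) :
    IsWalk src dst (m + 1) (Function.update p (m + 1) v) := by
  intro i hi
  rcases Nat.lt_succ_iff_lt_or_eq.mp hi with hi | rfl
  · simpa [Function.update_of_ne (show i ≠ m + 1 by omega),
      Function.update_of_ne (show i + 1 ≠ m + 1 by omega)] using h i hi
  · simpa using hv

theorem isDipath (h : IsWalk src dst m p) : IsDipath src dst m (fun a => p a) :=
  fun i => by simpa [vStep] using h i i.isLt

theorem transGen (h : IsWalk src dst m p) {i j : ℕ} (hij : i < j) (hjm : j ≤ m) :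
    Relation.TransGen (vStep src dst) (p i) (p j) := by
  induction j, hij using Nat.le_induction with
  | base => exact .single (h i (by omega))
  | succ j hij ih => exact (ih (by omega)).tail (h j (by omega))

theorem length_lt_card [Fintype V] (hacyc : ∀ v : V, ¬ Relation.TransGen (vStep src dst) v v)
    (h : IsWalk src dst m p) : m < Fintype.card V := by
  have hinj : Function.Injective (fun i : Fin (m + 1) => p i) := by
    intro a b (hab : p a = p b)
    by_contra hne
    rcases Fin.lt_or_lt_of_ne hne with hlt | hlt <;>
      exact hacyc _ (hab ▸ h.transGen hlt (by omega))
  simpa using Fintype.card_le_of_injective _ hinj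

end IsWalk

theorem SpreadLE.le_add {s : ℕ} (hs : SpreadLE src dst s) {m n : ℕ} {p q : ℕ → V}
    (hp : IsWalk src dst m p) (hq : IsWalk src dst n q) (h0 : p 0 = q 0) (hend : p m = q n)
    (hdisj : ∀ a b, 0 < a → a < m → 0 < b → b < n → p a ≠ q b) : m ≤ n + s :=
  (hs _ _ m n (fun a => p a) (fun b => q b) hp.isDipath hq.isDipath rfl h0.symm rfl hend.symm
    fun a b => hdisj a b).1

section Level

variable [Fintype V]

open Classical in
/-- The length of a longest directed walk ending at `v`. -/
noncomputable def level (src dst : E → V) (v : V) : ℕ :=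
  Nat.findGreatest (fun m => ∃ p, IsWalk src dst m p ∧ p m = v) (Fintype.card V)

theorem exists_isWalk_level (v : V) :
    ∃ p, IsWalk src dst (level src dst v) p ∧ p (level src dst v) = v := by
  classical
  refine Nat.findGreatest_spec (P := fun m => ∃ p, IsWalk src dst m p ∧ p m = v)
    (Nat.zero_le _) ⟨fun _ => v, fun i hi => absurd hi (Nat.not_lt_zero i), rfl⟩

variable (hacyc : ∀ v : V, ¬ Relation.TransGen (vStep src dst) v v)
include hacyc

theorem IsWalk.le_level {m : ℕ} {p : ℕ → V} (h : IsWalk src dst m p) :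
    m ≤ level src dst (p m) := by
  classical
  exact Nat.le_findGreatest (h.length_lt_card hacyc).le ⟨p, h, rfl⟩

theorem level_lt_level {u v : V} (huv : vStep src dst u v) : level src dst u < level src dst v := by
  obtain ⟨p, hp, hpu⟩ := exists_isWalk_level (src := src) (dst := dst) u
  simpa using (hp.snoc (by rw [hpu]; exact huv)).le_level hacyc

theorem level_lt_level_of_transGen {u v : V} (h : Relation.TransGen (vStep src dst) u v) :
    level src dst u < level src dst v := by
  induction h with
  | single huv => exact level_lt_level hacyc huv
  | tail _ hvw ih => exact ih.trans (level_lt_level hacyc hvw)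

theorem IsWalk.level_add_le {m : ℕ} {p : ℕ → V} (h : IsWalk src dst m p) {i j : ℕ} (hij : i ≤ j)
    (hjm : j ≤ m) : level src dst (p i) + (j - i) ≤ level src dst (p j) := by
  induction j, hij using Nat.le_induction with
  | base => simp
  | succ j hij ih =>
    have := level_lt_level hacyc (h j (by omega))
    have := ih (by omega)
    omega

theorem IsWalk.level_eq {m : ℕ} {p : ℕ → V} (h : IsWalk src dst m p)
    (hm : level src dst (p m) = m) {i : ℕ} (him : i ≤ m) : level src dst (p i) = i := by
  have := h.level_add_le hacyc (Nat.zero_le i) him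
  have := h.level_add_le hacyc him le_rfl
  omega

theorem eq_of_level_eq_zero (hsource : ∃! s₀ : V, ∀ e : E, dst e ≠ s₀) {u v : V}
    (hu : level src dst u = 0) (hv : level src dst v = 0) : u = v := by
  have hsrc : ∀ w, level src dst w = 0 → ∀ e : E, dst e ≠ w := by
    rintro w hw e rfl
    have := level_lt_level hacyc ⟨e, rfl, rfl⟩
    omega
  exact hsource.unique (hsrc u hu) (hsrc v hv)

theorem level_le_level_add (hsource : ∃! s₀ : V, ∀ e : E, dst e ≠ s₀) {s : ℕ}
    (hs : SpreadLE src dst s) {u v : V} (huv : vStep src dst u v) :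
    level src dst v ≤ level src dst u + s + 1 := by
  obtain ⟨p, hp, hpv⟩ := exists_isWalk_level (src := src) (dst := dst) v
  obtain ⟨r, hr, hru⟩ := exists_isWalk_level (src := src) (dst := dst) u
  have hp_level : ∀ i ≤ level src dst v, level src dst (p i) = i :=
    fun i hi => hp.level_eq hacyc (by rw [hpv]) hi
  have hr_level : ∀ j ≤ level src dst u, level src dst (r j) = j :=
    fun j hj => hr.level_eq hacyc (by rw [hru]) hj
  set q := Function.update r (level src dst u + 1) v
  have hq : IsWalk src dst (level src dst u + 1) q := hr.snoc (by rw [hru]; exact huv)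
  have hqr : ∀ j ≤ level src dst u, q j = r j :=
    fun j hj => Function.update_of_ne (by omega) _ _
  have h0 : p 0 = q 0 := by
    rw [hqr 0 (Nat.zero_le _)]
    exact eq_of_level_eq_zero hacyc hsource (hp_level 0 (Nat.zero_le _))
      (hr_level 0 (Nat.zero_le _))
  have hv_pos : 0 < level src dst v := by have := level_lt_level hacyc huv; omega
  obtain ⟨i, hi, j, hj, hpq, hdisj⟩ := exists_last_common_index p q hv_pos
    (Nat.succ_pos (level src dst u)) h0
  -- on a longest walk every vertex sits at the position given by its level
  have hij : i = j := by
    have := hr_level j (by omega)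
    rw [← hqr j (by omega), ← hpq, hp_level i hi.le] at this
    exact this
  have := SpreadLE.le_add hs (hp.drop i) (hq.drop j) (by simpa using hpq)
    (by simp only [show i + (level src dst v - i) = level src dst v by omega,
      show j + (level src dst u + 1 - j) = level src dst u + 1 by omega, hpv, q,
      Function.update_self])
    fun a b ha ha' hb hb' => hdisj (i + a) (by omega) (by omega) (j + b) (by omega)
  omega

theorem level_src_lt_of_lineLT {x y : E} (h : lineLT src dst x y) :
    level src dst (src x) < level src dst (src y) := by
  induction h with
  | single hxy => exact hxy ▸ level_lt_level hacyc ⟨_, rfl, rfl⟩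
  | tail _ hyz ih => exact ih.trans (hyz ▸ level_lt_level hacyc ⟨_, rfl, rfl⟩)

theorem level_le_level_add_of_mem_activeSet (hsource : ∃! s₀ : V, ∀ e : E, dst e ≠ s₀) {s : ℕ}
    (hs : SpreadLE src dst s) {n : ℕ} {L : E ≃ Fin n}
    (hL : ∀ a b, level src dst (src a) < level src dst (src b) → L a < L b) {i : ℕ} {v w : V}
    (hv : v ∈ activeSet src dst L i) (hw : w ∈ activeSet src dst L i) :
    level src dst v ≤ level src dst w + (s + 1) := by
  obtain ⟨a, -, ⟨hai, -⟩, rfl, -⟩ := hv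
  obtain ⟨-, b, ⟨-, hib⟩, -, rfl⟩ := hw
  have hab : level src dst (src a) ≤ level src dst (src b) :=
    not_lt.1 fun hba => absurd (hL b a hba) (by rw [Fin.lt_def]; omega)
  have := level_le_level_add hacyc hsource hs ⟨a, rfl, rfl⟩
  omega

theorem card_filter_level_eq_le {k : ℕ} (hwidth : WidthLE src dst k) (T : Finset V) (c : ℕ) :
    (T.filter (level src dst · = c)).card ≤ k :=
  hwidth _ fun u hu w hw _ huw => by
    have := level_lt_level_of_transGen hacyc huw
    simp only [Finset.mem_filter] at hu hw
    omega

theorem ncard_activeSet_le (hsource : ∃! s₀ : V, ∀ e : E, dst e ≠ s₀) {k s : ℕ}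
    (hwidth : WidthLE src dst k) (hs : SpreadLE src dst s) {n : ℕ} (L : E ≃ Fin n)
    (hL : ∀ a b, level src dst (src a) < level src dst (src b) → L a < L b) (i : ℕ) :
    (activeSet src dst L i).ncard ≤ k * (s + 2) := by
  classical
  rw [Set.ncard_eq_toFinset_card']
  exact Finset.card_le_mul_of_card_fiber_le _ _ (card_filter_level_eq_le hacyc hwidth _)
    fun v hv w hw => level_le_level_add_of_mem_activeSet hacyc hsource hs hL
      (Set.mem_toFinset.1 hv) (Set.mem_toFinset.1 hw)

end Level

end ArcDiagram

theorem stmt11_general {V E : Type*} [Fintype V] [Fintype E]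
    (src dst : E → V)
    (hacyc : ∀ v : V, ¬ Relation.TransGen (vStep src dst) v v)
    (hsource : ∃! s₀ : V, ∀ e : E, dst e ≠ s₀)
    (k s : ℕ)
    (hwidth : ∀ S : Finset V,
      (∀ u ∈ S, ∀ w ∈ S, u ≠ w → ¬ Relation.TransGen (vStep src dst) u w) →
      S.card ≤ k)
    (hspread : ∀ (u v : V) (m m' : ℕ) (p : Fin (m + 1) → V) (q : Fin (m' + 1) → V),
      IsDipath src dst m p → IsDipath src dst m' q →
      p 0 = u → q 0 = u → p (Fin.last m) = v → q (Fin.last m') = v →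
      (∀ (a : Fin (m + 1)) (b : Fin (m' + 1)),
        0 < (a : ℕ) → (a : ℕ) < m → 0 < (b : ℕ) → (b : ℕ) < m' → p a ≠ q b) →
      m ≤ m' + s ∧ m' ≤ m + s) :
    ∃ L : E ≃ Fin (Fintype.card E),
      (∀ x y : E, lineLT src dst x y → L x < L y) ∧
      ∀ i : ℕ, (activeSet src dst L i).ncard ≤ k * (s + 2) := by
  obtain ⟨L, hL⟩ :=
    Fintype.exists_equivFin_lt_of_lt (fun e => ArcDiagram.level src dst (src e))
  exact ⟨L, fun x y hxy => hL x y (ArcDiagram.level_src_lt_of_lineLT hacyc hxy),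
    ArcDiagram.ncard_activeSet_le hacyc hsource hwidth hspread L hL⟩

/-- let `P` be a finite N-free order with arc diagram the dag
`(V, E, src, dst)`.  If the width of (the transitive closure of) the arc
diagram is at most `k` and its spread is at most `s` (every pair of
interiorly disjoint directed `u`-to-`v` paths has length difference at most
`s`), then the activity satisfies `α(P) ≤ k · (s + 2)`: some linear extension
of `P` has all active sets of size at most `k · (s + 2)`. -/
theorem stmt11 {V E : Type*} [Fintype V] [Fintype E]
    (src dst : E → V)
    (hacyc : ∀ v : V, ¬ Relation.TransGen (vStep src dst) v v)
    (hsource : ∃! s₀ : V, ∀ e : E, dst e ≠ s₀)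
    (hsink : ∃! t₀ : V, ∀ e : E, src e ≠ t₀)
    (k s : ℕ)
    (hwidth : ∀ S : Finset V,
      (∀ u ∈ S, ∀ w ∈ S, u ≠ w → ¬ Relation.TransGen (vStep src dst) u w) →
      S.card ≤ k)
    (hspread : ∀ (u v : V) (m m' : ℕ) (p : Fin (m + 1) → V) (q : Fin (m' + 1) → V),
      IsDipath src dst m p → IsDipath src dst m' q →
      p 0 = u → q 0 = u → p (Fin.last m) = v → q (Fin.last m') = v →
      (∀ (a : Fin (m + 1)) (b : Fin (m' + 1)),
        0 < (a : ℕ) → (a : ℕ) < m → 0 < (b : ℕ) → (b : ℕ) < m' → p a ≠ q b) →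
      m ≤ m' + s ∧ m' ≤ m + s) :
    ∃ L : E ≃ Fin (Fintype.card E),
      (∀ x y : E, lineLT src dst x y → L x < L y) ∧
      ∀ i : ℕ, (activeSet src dst L i).ncard ≤ k * (s + 2) :=
  stmt11_general src dst hacyc hsource k s hwidth hspread
end

section
/- Let P be a finite N-free order with linear extension (x_1,…,x_n), where x_j corresponds to arc (v_j^-, v_j^+) of the arc diagram A(P). Then for each i ≥ 2, the source vertex v_i^- of x_i belongs to the active set A_{i-1} whenever x_i has at least one predecessor in P; moreover the immediate predecessors of x_i in P are exactly the arcs of A(P) with head v_i^-. -/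
/-- An arc order relation yields a vertex walk from the tail of the first
arc to the head of the last. -/
lemma lineLT_vwalk {V E : Type*} (src dst : E → V) {x y : E}
    (h : lineLT src dst x y) :
    Relation.ReflTransGen (vStep src dst) (dst x) (src y) := by
  induction h with
  | single h => exact h ▸ Relation.ReflTransGen.refl
  | tail h1 h2 ih =>
    exact ih.tail ⟨_, rfl, h2⟩

/-- let `P` be a finite N-free order, realized as the
line-digraph order of its arc diagram `(V, E, src, dst)`, and let `L` be a
linear extension of `P` listing the arcs.  If the element `e` occupies the
position leaving `t` elements before it, then (1) whenever `e` has a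
predecessor in `P`, its source vertex `src e` belongs to the active set
`A_t` (paper notation: `v_i^- ∈ A_{i-1}`); and (2) the immediate
predecessors of `e` in `P` are exactly the arcs with head `src e`. -/
theorem stmt15 {V E : Type*} [Fintype V] [Fintype E]
    (src dst : E → V)
    (hacyc : ∀ v : V, ¬ Relation.TransGen (vStep src dst) v v)
    (hsource : ∃! s : V, ∀ e : E, dst e ≠ s)
    (hsink : ∃! t : V, ∀ e : E, src e ≠ t)
    (L : E ≃ Fin (Fintype.card E))
    (hL : ∀ x y : E, lineLT src dst x y → L x < L y)
    (e : E) (t : ℕ) (het : (L e : ℕ) = t) :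
    ((∃ f : E, lineLT src dst f e) → src e ∈ activeSet src dst L t) ∧
    (∀ f : E,
      (lineLT src dst f e ∧ ¬ ∃ g : E, lineLT src dst f g ∧ lineLT src dst g e) ↔
      dst f = src e) := by
  constructor
  · rintro ⟨f, hf⟩
    obtain ⟨a, ha⟩ : ∃ a : E, dst a = src e := by
      cases hf with
      | single h => exact ⟨f, h⟩
      | tail _ h => exact ⟨_, h⟩
    have hlt : (L a : ℕ) < t := het ▸ hL a e (Relation.TransGen.single ha)
    exact ⟨a, e, ⟨hlt, le_of_eq het.symm⟩, ha, rfl⟩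
  · intro f
    constructor
    · rintro ⟨hfe, hno⟩
      cases hfe with
      | single h => exact h
      | tail h1 h2 => exact absurd ⟨_, h1, Relation.TransGen.single h2⟩ hno
    · intro h
      refine ⟨Relation.TransGen.single h, ?_⟩
      rintro ⟨g, hfg, hge⟩
      have w1 := lineLT_vwalk src dst hfg
      have w2 := lineLT_vwalk src dst hge
      have step : vStep src dst (src g) (dst g) := ⟨g, rfl, rfl⟩
      have : Relation.TransGen (vStep src dst) (dst f) (src e) :=
        Relation.TransGen.trans_right w1 (Relation.TransGen.trans_left
          (Relation.TransGen.single step) w2)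
      exact hacyc (src e) (h ▸ this)
end
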